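/- arXiv:1710.06374 — 7 statements merged into one kernel-verified Lean document; each statement's English description precedes it below -/
import Mathlib

section
/- Let d, n, d_1, ..., d_n be positive integers and let L_j : ℝ^d → ℝ^{d_j} (1 ≤ j ≤ n) be surjective linear maps whose Hölder–Brascamp–Lieb polytope 𝒫 is nonempty. Let B : [0,∞)^n → [0,∞) be Borel measurable, nondecreasing in each coordinate, with B(y_1,...,y_n) = 0 whenever some y_j = 0. If B is an HBL function for {L_j}, then there exists c > 0 such that B(λ_1 y_1, ..., λ_n y_n) ≥ c · min_{s ∈ 𝒫} λ_1^{s_1}···λ_n^{s_n} · B(y_1,...,y_n) for all 0 < λ_j, y_j < ∞. -/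
open MeasureTheory

noncomputable section

/-- The Hölder–Brascamp–Lieb polytope of a family of linear maps. -/
def HBLpolytope (d n : ℕ) (dj : Fin n → ℕ)
    (L : (j : Fin n) → (Fin d → ℝ) →ₗ[ℝ] (Fin (dj j) → ℝ)) : Set (Fin n → ℝ) :=
  {s | (∀ j, 0 ≤ s j) ∧ (∑ j, s j * (dj j : ℝ)) = (d : ℝ) ∧
    ∀ V : Submodule ℝ (Fin d → ℝ),
      (Module.finrank ℝ V : ℝ) ≤ ∑ j, s j * (Module.finrank ℝ (V.map (L j)) : ℝ)}

/-- `B : [0,∞)^n → [0,∞)` is an HBL function for the family `L`. -/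
def IsHBLFunction (d n : ℕ) (dj : Fin n → ℕ)
    (L : (j : Fin n) → (Fin d → ℝ) →ₗ[ℝ] (Fin (dj j) → ℝ))
    (B : (Fin n → ℝ) → ℝ) : Prop :=
  ∃ C : ℝ, ∀ f : (j : Fin n) → (Fin (dj j) → ℝ) → ℝ,
    (∀ j, ∀ y, 0 ≤ f j y) → (∀ j, Integrable (f j)) →
    ∫⁻ x : Fin d → ℝ, ENNReal.ofReal (B (fun j => f j (L j x)))
      ≤ ENNReal.ofReal (C * B (fun j => ∫ y, f j y))

/-!
Test the HBL inequality on indicator functions: the map dilating a subspace `V` by `e^τ` and a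
complement by `e^(τ-g)` sends the unit ball to a set of volume `≍ e^(τ d - g codim V)`, and `L_j`
maps that set into a set of volume `≍ e^(τ d_j - g codim L_j V)`. Hence every exponent pair
`(a, b) = τ (d_j; d) - g (codim L_j V; codim V)`, shifted by a vector depending only on `V`,
satisfies `e^b B(y) ≤ B(e^a y)` for all `y > 0`. Such pairs add up, monotonicity of `B` adds the
orthant, and there are only finitely many codimension vectors, so the whole cone they generate is
achievable up to one shift. By Farkas' lemma `(log λ; min_𝒫 ⟨s, log λ⟩)` lies in the closure of
this cone, since a separating functional `(w, β)` would make `w / (-β)` a point of `𝒫` beating the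
minimum; lowering the last coordinate by a constant moves it into the cone.
-/

open Module Metric Set Real

namespace Submodule

variable {K E : Type*} [Field K] [AddCommGroup E] [Module K E] {p q : Submodule K E}

def dilation (h : IsCompl p q) (a b : K) : E →ₗ[K] E :=
  a • p.projection q h + b • q.projection p h.symm

theorem dilation_eq_conj (h : IsCompl p q) (a b : K) :
    dilation h a b = (prodEquivOfIsCompl p q h).toLinearMap ∘ₗ
      ((a • LinearMap.id).prodMap (b • LinearMap.id)) ∘ₗ
      (prodEquivOfIsCompl p q h).symm.toLinearMap := by
  rw [← LinearMap.comp_assoc, LinearEquiv.eq_comp_toLinearMap_symm]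
  ext x <;> simp [dilation]

theorem det_dilation [FiniteDimensional K E] (h : IsCompl p q) (a b : K) :
    LinearMap.det (dilation h a b) = a ^ finrank K p * b ^ finrank K q := by
  rw [dilation_eq_conj, LinearMap.det_conj, LinearMap.det_prodMap, LinearMap.det_smul,
    LinearMap.det_smul]
  simp

theorem exists_comp_dilation_eq {F : Type*} [AddCommGroup F] [Module K F] (L : E →ₗ[K] F)
    {U : Submodule K F} (hpq : IsCompl p q) (hU : IsCompl (p.map L) U) :
    ∃ A C : E →ₗ[K] F, ∀ a b δ : K, a * δ = b →
      L ∘ₗ dilation hpq a b = dilation hU a b ∘ₗ (A + δ • C) := by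
  let P := p.projection q hpq
  let P' := q.projection p hpq.symm
  let Q := (p.map L).projection U hU
  let Q' := U.projection (p.map L) hU.symm
  have hQ_LP (x : E) : Q (L (P x)) = L (P x) :=
    projection_apply_of_mem_left hU (mem_map_of_mem (projection_apply_mem hpq x))
  have hQ'_LP (x : E) : Q' (L (P x)) = 0 :=
    projection_apply_of_mem_right hU.symm (mem_map_of_mem (projection_apply_mem hpq x))
  have hQQ (z : F) : Q (Q z) = Q z := projection_apply_of_mem_left hU (projection_apply_mem hU z)
  have hQQ' (z : F) : Q (Q' z) = 0 :=
    projection_apply_of_mem_right hU (projection_apply_mem hU.symm z)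
  have hQ'Q (z : F) : Q' (Q z) = 0 :=
    projection_apply_of_mem_right hU.symm (projection_apply_mem hU z)
  have hQ'Q' (z : F) : Q' (Q' z) = Q' z :=
    projection_apply_of_mem_left hU.symm (projection_apply_mem hU.symm z)
  refine ⟨L ∘ₗ P + Q' ∘ₗ L ∘ₗ P', Q ∘ₗ L ∘ₗ P', fun a b δ hab => LinearMap.ext fun x => ?_⟩
  change L (a • P x + b • P' x) = a • Q _ + b • Q' _
  simp only [LinearMap.comp_apply, LinearMap.add_apply, LinearMap.smul_apply,
    map_add, map_smul, hQ_LP, hQ'_LP, hQQ', hQ'Q, hQQ, hQ'Q']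
  have hsplit : Q (L (P' x)) + Q' (L (P' x)) = L (P' x) :=
    projection_add_projection_eq_self hU _
  linear_combination (norm := module) (-b) • hsplit - hab • Q (L (P' x))

end Submodule

theorem LinearMap.exists_add_smul_apply_mem_closedBall {E F : Type*} [NormedAddCommGroup E]
    [NormedSpace ℝ E] [FiniteDimensional ℝ E] [NormedAddCommGroup F] [NormedSpace ℝ F]
    (A C : E →ₗ[ℝ] F) :
    ∃ ρ > 0, ∀ δ ∈ Icc (0 : ℝ) 1, ∀ x ∈ closedBall (0 : E) 1,
      (A + δ • C) x ∈ closedBall (0 : F) ρ := by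
  refine ⟨‖A.toContinuousLinearMap‖ + ‖C.toContinuousLinearMap‖ + 1, by positivity,
    fun δ ⟨hδ0, hδ1⟩ x hx => ?_⟩
  rw [mem_closedBall_zero_iff] at hx ⊢
  have hA := A.toContinuousLinearMap.le_opNorm x
  have hC := C.toContinuousLinearMap.le_opNorm x
  simp only [LinearMap.coe_toContinuousLinearMap'] at hA hC
  calc ‖A x + δ • C x‖ ≤ ‖A x‖ + δ * ‖C x‖ := by
        simpa [norm_smul, abs_of_nonneg hδ0] using norm_add_le (A x) (δ • C x)
    _ ≤ ‖A.toContinuousLinearMap‖ * 1 + 1 * (‖C.toContinuousLinearMap‖ * 1) := by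
        gcongr
        · exact hA.trans (by gcongr)
        · exact hC.trans (by gcongr)
    _ ≤ _ := by linarith

namespace Submodule

variable {E F : Type*} [NormedAddCommGroup E] [NormedSpace ℝ E] [FiniteDimensional ℝ E]
  [NormedAddCommGroup F] [NormedSpace ℝ F] {p q : Submodule ℝ E}

theorem exists_mapsTo_image_dilation (L : E →ₗ[ℝ] F) {U : Submodule ℝ F} (hpq : IsCompl p q)
    (hU : IsCompl (p.map L) U) :
    ∃ ρ > 0, ∀ a b : ℝ, 0 < a → 0 ≤ b → b ≤ a →
      MapsTo L (dilation hpq a b '' closedBall 0 1) (dilation hU a b '' closedBall 0 ρ) := by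
  obtain ⟨A, C, hAC⟩ := exists_comp_dilation_eq L hpq hU
  obtain ⟨ρ, hρ, hbound⟩ := A.exists_add_smul_apply_mem_closedBall C
  refine ⟨ρ, hρ, fun a b ha hb hba => ?_⟩
  rintro _ ⟨x, hx, rfl⟩
  exact ⟨_, hbound (b / a) ⟨div_nonneg hb ha.le, (div_le_one ha).2 hba⟩ x hx,
    (LinearMap.congr_fun (hAC a b (b / a) (mul_div_cancel₀ b ha.ne')) x).symm⟩

theorem addHaar_real_image_dilation_exp [MeasurableSpace E] [BorelSpace E] (μ : Measure E)
    [μ.IsAddHaarMeasure] (h : IsCompl p q) (τ g : ℝ) (s : Set E) :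
    μ.real (dilation h (exp τ) (exp (τ - g)) '' s) =
      exp (τ * finrank ℝ E - g * (finrank ℝ E - finrank ℝ p)) * μ.real s := by
  have hdim : (finrank ℝ E : ℝ) - finrank ℝ p = finrank ℝ q := by
    rw [← finrank_add_eq_of_isCompl h]; push_cast; ring
  rw [measureReal_def, Measure.addHaar_image_linearMap, ENNReal.toReal_mul,
    ENNReal.toReal_ofReal (abs_nonneg _), det_dilation, ← exp_nat_mul, ← exp_nat_mul,
    ← exp_add, abs_of_pos (exp_pos _), hdim, ← finrank_add_eq_of_isCompl h, measureReal_def]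
  push_cast
  ring_nf

end Submodule

theorem PointedCone.exists_nonneg_neg_of_notMem_closure {E : Type*} [NormedAddCommGroup E]
    [NormedSpace ℝ E] (K : PointedCone ℝ E) {x : E} (hx : x ∉ closure (K : Set E)) :
    ∃ f : StrongDual ℝ E, (∀ y ∈ K, 0 ≤ f y) ∧ f x < 0 := by
  obtain ⟨f, hf, hfx⟩ :=
    ProperCone.hyperplane_separation_point ⟨K.closure, isClosed_closure⟩ hx
  exact ⟨f, fun y hy => hf y (subset_closure hy), hfx⟩

theorem Prod.mk_zero_eq_sum_smul_single {ι R : Type*} [Fintype ι] [DecidableEq ι] [Semiring R]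
    (a : ι → R) : (a, (0 : R)) = ∑ j, a j • ((Pi.single j 1 : ι → R), (0 : R)) := by
  ext i
  · simp [Prod.fst_sum, Finset.sum_apply, Pi.single_apply]
  · simp [Prod.snd_sum]

theorem LinearMap.apply_prod_eq_sum {ι R : Type*} [Fintype ι] [DecidableEq ι] [CommSemiring R]
    (f : (ι → R) × R →ₗ[R] R) (a : ι → R) (b : R) :
    f (a, b) = ∑ j, a j * f (Pi.single j 1, 0) + b * f (0, 1) := by
  calc f (a, b) = f (a, 0) + f (b • (0, 1)) := by rw [← map_add]; simp
    _ = _ := by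
      rw [Prod.mk_zero_eq_sum_smul_single a, map_sum, map_smul]
      simp only [map_smul, smul_eq_mul]

def AddSubmonoid.ContainsTranslate {E : Type*} [AddCommMonoid E] (A : AddSubmonoid E)
    (S : Set E) : Prop :=
  ∃ e, ∀ x ∈ S, x + e ∈ A

namespace AddSubmonoid.ContainsTranslate

variable {R E : Type*} [Semiring R] [PartialOrder R] [IsOrderedRing R] [AddCommMonoid E]
  [Module R E] {A : AddSubmonoid E}

theorem sup {C D : PointedCone R E} (hC : A.ContainsTranslate C) (hD : A.ContainsTranslate D) :
    A.ContainsTranslate (C ⊔ D : PointedCone R E) := by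
  obtain ⟨e, he⟩ := hC
  obtain ⟨e', he'⟩ := hD
  refine ⟨e + e', fun x hx => ?_⟩
  obtain ⟨y, hy, z, hz, rfl⟩ := Submodule.mem_sup.1 hx
  convert A.add_mem (he y hy) (he' z hz) using 1
  abel

theorem hull_of_finite {G : Set E} (hG : G.Finite)
    (h : ∀ v ∈ G, A.ContainsTranslate (PointedCone.hull R {v})) :
    A.ContainsTranslate (PointedCone.hull R G) := by
  induction G, hG using Set.Finite.induction_on with
  | empty => exact ⟨0, fun x hx => by simp_all⟩
  | @insert v s _ _ ih =>
    rw [PointedCone.hull, Submodule.span_insert]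
    exact (h v (mem_insert v s)).sup (ih fun u hu => h u (mem_insert_of_mem v hu))

theorem hull_singleton {v e : E} (h : ∀ c : R, 0 ≤ c → c • v + e ∈ A) :
    A.ContainsTranslate (PointedCone.hull R {v}) := by
  refine ⟨e, fun x hx => ?_⟩
  obtain ⟨c, rfl⟩ := Submodule.mem_span_singleton.1 hx
  exact h c c.2

end AddSubmonoid.ContainsTranslate

def scalingSubmonoid {ι : Type*} (B : (ι → ℝ) → ℝ) : AddSubmonoid ((ι → ℝ) × ℝ) where
  carrier := {p | ∀ y : ι → ℝ, (∀ j, 0 < y j) → exp p.2 * B y ≤ B fun j => exp (p.1 j) * y j}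
  zero_mem' y _ := by simp
  add_mem' {p q} hp hq y hy := by
    calc exp (p + q).2 * B y = exp p.2 * (exp q.2 * B y) := by
          rw [Prod.snd_add, exp_add, mul_assoc]
      _ ≤ exp p.2 * B fun j => exp (q.1 j) * y j := by gcongr; exact hq y hy
      _ ≤ B fun j => exp (p.1 j) * (exp (q.1 j) * y j) :=
          hp _ fun j => mul_pos (exp_pos _) (hy j)
      _ = B fun j => exp ((p + q).1 j) * y j := by
          simp only [Prod.fst_add, Pi.add_apply, exp_add, mul_assoc]

theorem mem_scalingSubmonoid_of_nonneg {ι : Type*} {B : (ι → ℝ) → ℝ}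
    (hBnonneg : ∀ y : ι → ℝ, (∀ j, 0 ≤ y j) → 0 ≤ B y)
    (hBmono : ∀ y z : ι → ℝ, (∀ j, 0 ≤ y j) → (∀ j, y j ≤ z j) → B y ≤ B z)
    {p : (ι → ℝ) × ℝ} (h1 : ∀ j, 0 ≤ p.1 j) (h2 : p.2 ≤ 0) : p ∈ scalingSubmonoid B := by
  intro y hy
  calc exp p.2 * B y ≤ 1 * B y := by
        gcongr
        · exact hBnonneg y fun j => (hy j).le
        · exact exp_le_one_iff.2 h2
    _ ≤ B fun j => exp (p.1 j) * y j := by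
        rw [one_mul]
        exact hBmono _ _ (fun j => (hy j).le) fun j =>
          le_mul_of_one_le_left (hy j).le (one_le_exp (h1 j))

theorem log_sInf_image_prod_rpow_le {ι : Type*} [Fintype ι] {S : Set (ι → ℝ)} {lam : ι → ℝ}
    (hlam : ∀ j, 0 < lam j) (hpos : 0 < sInf ((fun s => ∏ j, lam j ^ s j) '' S))
    {s : ι → ℝ} (hs : s ∈ S) :
    log (sInf ((fun s => ∏ j, lam j ^ s j) '' S)) ≤ ∑ j, s j * log (lam j) := by
  have hbdd : BddBelow ((fun s => ∏ j, lam j ^ s j) '' S) := ⟨0, by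
    rintro _ ⟨s, -, rfl⟩; exact Finset.prod_nonneg fun j _ => (rpow_pos_of_pos (hlam j) _).le⟩
  calc _ ≤ log (∏ j, lam j ^ s j) := log_le_log hpos (csInf_le hbdd ⟨s, hs, rfl⟩)
    _ = ∑ j, s j * log (lam j) := by
      rw [log_prod fun j _ => (rpow_pos_of_pos (hlam j) _).ne']
      exact Finset.sum_congr rfl fun j _ => log_rpow (hlam j) _

section HBL

variable {d n : ℕ} {dj : Fin n → ℕ}

def dimVector (d : ℕ) (dj : Fin n → ℕ) : (Fin n → ℝ) × ℝ := (fun j => (dj j : ℝ), (d : ℝ))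

def codimVector (L : (j : Fin n) → (Fin d → ℝ) →ₗ[ℝ] (Fin (dj j) → ℝ))
    (V : Submodule ℝ (Fin d → ℝ)) : (Fin n → ℝ) × ℝ :=
  (fun j => (dj j : ℝ) - finrank ℝ (V.map (L j)), (d : ℝ) - finrank ℝ V)

variable {L : (j : Fin n) → (Fin d → ℝ) →ₗ[ℝ] (Fin (dj j) → ℝ)} {B : (Fin n → ℝ) → ℝ}

theorem finite_range_codimVector : (range (codimVector L)).Finite := by
  refine (finite_range fun r : ((j : Fin n) → Fin (dj j + 1)) × Fin (d + 1) =>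
    ((fun j => (dj j : ℝ) - (r.1 j : ℕ)), (d : ℝ) - (r.2 : ℕ))).subset ?_
  rintro _ ⟨V, rfl⟩
  refine ⟨(fun j => ⟨finrank ℝ (V.map (L j)), Nat.lt_succ_of_le ?_⟩,
    ⟨finrank ℝ V, Nat.lt_succ_of_le ?_⟩), rfl⟩
  · simpa using (V.map (L j)).finrank_le
  · simpa using V.finrank_le

theorem IsHBLFunction.exists_volume_mul_le (hB : IsHBLFunction d n dj L B)
    (hBnonneg : ∀ y : Fin n → ℝ, (∀ j, 0 ≤ y j) → 0 ≤ B y) :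
    ∃ C > 0, ∀ (K : Set (Fin d → ℝ)) (E : (j : Fin n) → Set (Fin (dj j) → ℝ)) (y : Fin n → ℝ),
      MeasurableSet K → (∀ j, MeasurableSet (E j)) → (∀ j, volume (E j) < ⊤) →
      (∀ j, MapsTo (L j) K (E j)) → (∀ j, 0 ≤ y j) →
      volume.real K * B y ≤ C * B (fun j => volume.real (E j) * y j) := by
  obtain ⟨C, hC⟩ := hB
  refine ⟨max C 1, by positivity, fun K E y hK hE hEfin hKE hy => ?_⟩
  set f : (j : Fin n) → (Fin (dj j) → ℝ) → ℝ := fun j => (E j).indicator fun _ => y j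
  have hf_int : (fun j => ∫ z, f j z) = fun j => volume.real (E j) * y j := by
    ext j
    simp [f, integral_indicator_const _ (hE j), smul_eq_mul]
  have hf_nonneg : ∀ j z, 0 ≤ f j z := fun j _ => indicator_nonneg (fun _ _ => hy j) _
  have hf_integrable : ∀ j, Integrable (f j) := fun j =>
    (integrable_indicator_iff (hE j)).2 (integrableOn_const (hEfin j).ne)
  have hlower : ENNReal.ofReal (B y) * volume K ≤
      ∫⁻ x, ENNReal.ofReal (B fun j => f j (L j x)) := by
    calc ENNReal.ofReal (B y) * volume K = ∫⁻ _ in K, ENNReal.ofReal (B y) :=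
          (setLIntegral_const K _).symm
      _ = ∫⁻ x in K, ENNReal.ofReal (B fun j => f j (L j x)) := by
          refine setLIntegral_congr_fun hK fun x hx => ?_
          simp [f, indicator_of_mem (hKE _ hx)]
      _ ≤ _ := setLIntegral_le_lintegral _ _
  have hBw_nonneg : 0 ≤ B (fun j => volume.real (E j) * y j) :=
    hBnonneg _ fun j => mul_nonneg measureReal_nonneg (hy j)
  have key := ENNReal.toReal_mono ENNReal.ofReal_ne_top
    (hlower.trans (hC f hf_nonneg hf_integrable))
  rw [hf_int, ENNReal.toReal_mul, ENNReal.toReal_ofReal (hBnonneg y hy),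
    ENNReal.toReal_ofReal'] at key
  rw [mul_comm]
  calc _ ≤ max (C * B fun j => volume.real (E j) * y j) 0 := key
    _ ≤ _ := max_le (by gcongr; exact le_max_left _ _) (by positivity)

theorem IsHBLFunction.exists_add_mem_scalingSubmonoid (hB : IsHBLFunction d n dj L B)
    (hBnonneg : ∀ y : Fin n → ℝ, (∀ j, 0 ≤ y j) → 0 ≤ B y) (V : Submodule ℝ (Fin d → ℝ)) :
    ∃ e, ∀ τ g : ℝ, 0 ≤ g →
      τ • dimVector d dj - g • codimVector L V + e ∈ scalingSubmonoid B := by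
  obtain ⟨C, hC, hHBL⟩ := hB.exists_volume_mul_le hBnonneg
  obtain ⟨W, hVW⟩ := V.exists_isCompl
  choose U hU using fun j => (V.map (L j)).exists_isCompl
  choose ρ hρ hmaps using fun j => Submodule.exists_mapsTo_image_dilation (L j) hVW (hU j)
  have hball {m : ℕ} {r : ℝ} (hr : 0 < r) : 0 < volume.real (closedBall (0 : Fin m → ℝ) r) :=
    ENNReal.toReal_pos (measure_closedBall_pos volume 0 hr).ne' measure_closedBall_lt_top.ne
  set κ₀ := volume.real (closedBall (0 : Fin d → ℝ) 1)
  set κ := fun j => volume.real (closedBall (0 : Fin (dj j) → ℝ) (ρ j))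
  refine ⟨(fun j => log (κ j), log (κ₀ / C)), fun τ g hg y hy => ?_⟩
  set K := Submodule.dilation hVW (exp τ) (exp (τ - g)) '' closedBall 0 1
  set E := fun j => Submodule.dilation (hU j) (exp τ) (exp (τ - g)) '' closedBall 0 (ρ j)
  have hK : IsCompact K :=
    (isCompact_closedBall 0 1).image (LinearMap.continuous_of_finiteDimensional _)
  have hE j : IsCompact (E j) :=
    (isCompact_closedBall 0 (ρ j)).image (LinearMap.continuous_of_finiteDimensional _)
  have key := hHBL K E y hK.measurableSet (fun j => (hE j).measurableSet)
    (fun j => (hE j).measure_lt_top)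
    (fun j => hmaps j _ _ (exp_pos τ) (exp_pos _).le (exp_le_exp.2 (by linarith)))
    fun j => (hy j).le
  simp only [K, E, Submodule.addHaar_real_image_dilation_exp, finrank_fin_fun] at key
  have hκ j : exp (log (κ j)) = κ j := exp_log (hball (hρ j))
  have hκ₀ : exp (log (κ₀ / C)) = κ₀ / C := exp_log (div_pos (hball one_pos) hC)
  simp only [dimVector, codimVector, Prod.smul_mk, Prod.mk_sub_mk, Prod.mk_add_mk, smul_eq_mul,
    Pi.add_apply, Pi.sub_apply, Pi.smul_apply, exp_add, hκ, hκ₀]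
  calc _ = exp (τ * d - g * (d - finrank ℝ V)) * κ₀ * B y / C := by ring
    _ ≤ _ := (div_le_iff₀' hC).2 key

/- `±dimVector` and `-codimVector L V` are the exponents realised by the dilations above; the
coordinate vectors `(e_j, 0)` and `(0, -1)` come from monotonicity and nonnegativity of `B`. -/
variable (L) in
def hblGenerators : Set ((Fin n → ℝ) × ℝ) :=
  {dimVector d dj, -dimVector d dj, (0, -1)} ∪ range (fun j => (Pi.single j 1, 0)) ∪
    range fun V => -codimVector L V

variable (L) in
def hblCone : PointedCone ℝ ((Fin n → ℝ) × ℝ) := PointedCone.hull ℝ (hblGenerators L)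

theorem finite_hblGenerators : (hblGenerators L).Finite :=
  ((toFinite _).union (finite_range _)).union <|
    (finite_range_codimVector.image Neg.neg).subset <| by
      rintro _ ⟨V, rfl⟩; exact ⟨_, ⟨V, rfl⟩, rfl⟩

theorem IsHBLFunction.containsTranslate_hblCone (hB : IsHBLFunction d n dj L B)
    (hBnonneg : ∀ y : Fin n → ℝ, (∀ j, 0 ≤ y j) → 0 ≤ B y)
    (hBmono : ∀ y z : Fin n → ℝ, (∀ j, 0 ≤ y j) → (∀ j, y j ≤ z j) → B y ≤ B z) :
    (scalingSubmonoid B).ContainsTranslate (hblCone L) := by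
  refine AddSubmonoid.ContainsTranslate.hull_of_finite finite_hblGenerators fun v hv => ?_
  have horthant (p : (Fin n → ℝ) × ℝ) (h1 : ∀ j, 0 ≤ p.1 j) (h2 : p.2 ≤ 0) :
      (scalingSubmonoid B).ContainsTranslate (PointedCone.hull ℝ {p}) :=
    AddSubmonoid.ContainsTranslate.hull_singleton (e := 0) fun c hc => by
      simpa using mem_scalingSubmonoid_of_nonneg hBnonneg hBmono (p := c • p)
        (fun j => mul_nonneg hc (h1 j)) (mul_nonpos_of_nonneg_of_nonpos hc h2)
  obtain ⟨e, he⟩ := hB.exists_add_mem_scalingSubmonoid hBnonneg ⊥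
  rcases hv with ((rfl | rfl | rfl) | ⟨j, rfl⟩) | ⟨V, rfl⟩
  · exact AddSubmonoid.ContainsTranslate.hull_singleton fun c _ => by simpa using he c 0 le_rfl
  · exact AddSubmonoid.ContainsTranslate.hull_singleton fun c _ => by
      simpa using he (-c) 0 le_rfl
  · exact horthant _ (fun j => le_rfl) (by norm_num)
  · exact horthant _ (fun k => by simp [Pi.single_apply]; split_ifs <;> norm_num) le_rfl
  · obtain ⟨e', he'⟩ := hB.exists_add_mem_scalingSubmonoid hBnonneg V
    exact AddSubmonoid.ContainsTranslate.hull_singleton fun c hc => by simpa using he' 0 c hc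

theorem sum_mul_add_mul_nonneg_of_forall_mem_HBLpolytope (hdj : ∀ j, 0 < dj j)
    {w : Fin n → ℝ} {β : ℝ} (hw : ∀ j, 0 ≤ w j) (hβ : β ≤ 0)
    (hdim : ∑ j, (dj j : ℝ) * w j + d * β = 0)
    (hcodim : ∀ V, ∑ j, (codimVector L V).1 j * w j + (codimVector L V).2 * β ≤ 0)
    {μ : Fin n → ℝ} {m : ℝ} (hm : ∀ s ∈ HBLpolytope d n dj L, m ≤ ∑ j, s j * μ j) :
    0 ≤ ∑ j, μ j * w j + m * β := by
  rcases hβ.lt_or_eq with hβ | rfl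
  · have hβ' : 0 < -β := neg_pos.2 hβ
    have hβ0 : β ≠ 0 := hβ.ne
    have hmem : (fun j => w j / -β) ∈ HBLpolytope d n dj L := by
      refine ⟨fun j => div_nonneg (hw j) hβ'.le, ?_, fun V => ?_⟩
      · simp only [div_mul_eq_mul_div, ← Finset.sum_div, mul_comm (w _)]
        rw [div_eq_iff hβ'.ne']
        linarith
      · have := hcodim V
        simp only [codimVector, sub_mul, Finset.sum_sub_distrib] at this
        simp only [div_mul_eq_mul_div, ← Finset.sum_div, le_div_iff₀ hβ', mul_comm (w _)]
        linarith
    have hsum : ∑ j, μ j * w j = -β * ∑ j, w j / -β * μ j := by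
      rw [Finset.mul_sum]
      exact Finset.sum_congr rfl fun j _ => by field_simp
    nlinarith [hm _ hmem]
  · have hw0 : ∀ j, w j = 0 := by
      have := (Finset.sum_eq_zero_iff_of_nonneg fun j _ =>
        mul_nonneg (Nat.cast_nonneg (dj j)) (hw j)).1 (by simpa using hdim)
      exact fun j => (mul_eq_zero.1 (this j (Finset.mem_univ j))).resolve_left
        (Nat.cast_ne_zero.2 (hdj j).ne')
    simp [hw0]

theorem mem_closure_hblCone (hdj : ∀ j, 0 < dj j) {μ : Fin n → ℝ} {m : ℝ}
    (hm : ∀ s ∈ HBLpolytope d n dj L, m ≤ ∑ j, s j * μ j) :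
    (μ, m) ∈ closure (hblCone L : Set ((Fin n → ℝ) × ℝ)) := by
  by_contra hnot
  obtain ⟨f, hf, hfx⟩ := (hblCone L).exists_nonneg_neg_of_notMem_closure hnot
  have hgen v (hv : v ∈ hblGenerators L) : 0 ≤ f v := hf v (PointedCone.subset_hull hv)
  have hf_eq (v : (Fin n → ℝ) × ℝ) := f.toLinearMap.apply_prod_eq_sum v.1 v.2
  simp only [ContinuousLinearMap.coe_coe, Prod.mk.eta] at hf_eq
  refine hfx.not_ge ?_
  rw [hf_eq (μ, m)]
  refine sum_mul_add_mul_nonneg_of_forall_mem_HBLpolytope hdj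
    (fun j => hgen _ (Or.inl (Or.inr ⟨j, rfl⟩))) ?_ ?_ (fun V => ?_) hm
  · have := hgen (0, -1) (by simp [hblGenerators])
    rw [hf_eq] at this
    simpa using this
  · have h₁ := hgen (dimVector d dj) (by simp [hblGenerators])
    have h₂ := hgen (-dimVector d dj) (by simp [hblGenerators])
    rw [hf_eq] at h₁
    rw [map_neg, hf_eq] at h₂
    simp only [dimVector] at h₁ h₂
    linarith
  · have := hgen (-codimVector L V) (Or.inr ⟨V, rfl⟩)
    rw [map_neg, hf_eq] at this
    linarith

theorem smul_dimVector_mem_hblCone (τ : ℝ) : τ • dimVector d dj ∈ hblCone L := by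
  rcases le_total 0 τ with hτ | hτ
  · exact (hblCone L).smul_mem hτ (PointedCone.subset_hull (by simp [hblGenerators]))
  · simpa using (hblCone L).smul_mem (neg_nonneg.2 hτ)
      (PointedCone.subset_hull (show -dimVector d dj ∈ hblGenerators L by simp [hblGenerators]))

theorem mem_hblCone_of_nonneg {a : Fin n → ℝ} {b : ℝ} (ha : ∀ j, 0 ≤ a j) (hb : b ≤ 0) :
    (a, b) ∈ hblCone L := by
  have hab : (a, b) = (a, 0) + (-b) • ((0 : Fin n → ℝ), (-1 : ℝ)) := by ext <;> simp
  rw [hab, Prod.mk_zero_eq_sum_smul_single]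
  refine add_mem (sum_mem fun j _ => ?_) ?_
  · exact (hblCone L).smul_mem (ha j) (PointedCone.subset_hull (Or.inl (Or.inr ⟨j, rfl⟩)))
  · exact (hblCone L).smul_mem (neg_nonneg.2 hb) (PointedCone.subset_hull (by simp [hblGenerators]))

theorem exists_sub_mem_hblCone (hdj : ∀ j, 0 < dj j) (e : (Fin n → ℝ) × ℝ) :
    ∃ C : ℝ, ∀ x ∈ closure (hblCone L : Set ((Fin n → ℝ) × ℝ)), x - (0, C) - e ∈ hblCone L := by
  set Γ := 1 + ∑ j, |e.1 j| with hΓ_def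
  refine ⟨1 + |e.2| + Γ * d, fun x hx => ?_⟩
  obtain ⟨z, hz, hxz⟩ := Metric.mem_closure_iff.1 hx 1 one_pos
  rw [Prod.dist_eq, max_lt_iff] at hxz
  have hx₁ j : |x.1 j - z.1 j| < 1 := by
    rw [← Real.dist_eq]; exact (dist_le_pi_dist x.1 z.1 j).trans_lt hxz.1
  have hx₂ : |x.2 - z.2| < 1 := by rw [← Real.dist_eq]; exact hxz.2
  have hsplit : x - (0, 1 + |e.2| + Γ * d) - e = z + (-Γ) • dimVector d dj +
      (fun j => x.1 j - z.1 j - e.1 j + Γ * dj j, x.2 - z.2 - e.2 - 1 - |e.2|) := by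
    ext <;> simp [dimVector] <;> ring
  rw [hsplit]
  refine add_mem (add_mem hz (smul_dimVector_mem_hblCone _))
    (mem_hblCone_of_nonneg (fun j => ?_) ?_)
  · have hej : |e.1 j| ≤ ∑ k, |e.1 k| :=
      Finset.single_le_sum (f := fun k => |e.1 k|) (fun k _ => abs_nonneg _) (Finset.mem_univ j)
    have hΓ : Γ ≤ Γ * dj j :=
      le_mul_of_one_le_right (by positivity) (Nat.one_le_cast.2 (hdj j))
    linarith [le_abs_self (e.1 j), neg_lt_of_abs_lt (hx₁ j)]
  · linarith [le_abs_self (x.2 - z.2), neg_abs_le e.2]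

end HBL

theorem stmt3_general (d n : ℕ) (dj : Fin n → ℕ) (hdj : ∀ j, 0 < dj j)
    (L : (j : Fin n) → (Fin d → ℝ) →ₗ[ℝ] (Fin (dj j) → ℝ))
    (B : (Fin n → ℝ) → ℝ)
    (hBnonneg : ∀ y : Fin n → ℝ, (∀ j, 0 ≤ y j) → 0 ≤ B y)
    (hBmono : ∀ y z : Fin n → ℝ, (∀ j, 0 ≤ y j) → (∀ j, y j ≤ z j) → B y ≤ B z)
    (hB : IsHBLFunction d n dj L B) :
    ∃ c : ℝ, 0 < c ∧ ∀ lam y : Fin n → ℝ, (∀ j, 0 < lam j) → (∀ j, 0 < y j) →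
      c * sInf ((fun s : Fin n → ℝ => ∏ j, lam j ^ s j) '' HBLpolytope d n dj L) * B y
        ≤ B (fun j => lam j * y j) := by
  obtain ⟨e, he⟩ := hB.containsTranslate_hblCone hBnonneg hBmono
  obtain ⟨C, hC⟩ := exists_sub_mem_hblCone (L := L) hdj e
  refine ⟨exp (-C), exp_pos _, fun lam y hlam hy => ?_⟩
  set I := sInf ((fun s : Fin n → ℝ => ∏ j, lam j ^ s j) '' HBLpolytope d n dj L)
  have hI_nonneg : 0 ≤ I := Real.sInf_nonneg <| by
    rintro _ ⟨s, -, rfl⟩; exact Finset.prod_nonneg fun j _ => (rpow_pos_of_pos (hlam j) _).le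
  rcases hI_nonneg.eq_or_lt with hI | hI
  · rw [← hI, mul_zero, zero_mul]
    exact hBnonneg _ fun j => (mul_pos (hlam j) (hy j)).le
  have key := he _ (hC _ (mem_closure_hblCone hdj fun s hs =>
    log_sInf_image_prod_rpow_le hlam hI hs)) y hy
  simp only [sub_add_cancel, Prod.fst_sub, Prod.snd_sub, Pi.sub_apply, Pi.zero_apply, sub_zero,
    exp_log (hlam _), exp_sub] at key
  rw [exp_log hI] at key
  calc exp (-C) * I * B y = I / exp C * B y := by rw [exp_neg]; ring
    _ ≤ _ := key

theorem stmt3 (d n : ℕ) (hd : 0 < d) (hn : 0 < n) (dj : Fin n → ℕ) (hdj : ∀ j, 0 < dj j)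
    (L : (j : Fin n) → (Fin d → ℝ) →ₗ[ℝ] (Fin (dj j) → ℝ))
    (hL : ∀ j, Function.Surjective (L j))
    (hP : (HBLpolytope d n dj L).Nonempty)
    (B : (Fin n → ℝ) → ℝ) (hBmeas : Measurable B)
    (hBnonneg : ∀ y : Fin n → ℝ, (∀ j, 0 ≤ y j) → 0 ≤ B y)
    (hBmono : ∀ y z : Fin n → ℝ, (∀ j, 0 ≤ y j) → (∀ j, y j ≤ z j) → B y ≤ B z)
    (hBzero : ∀ y : Fin n → ℝ, (∀ j, 0 ≤ y j) → (∃ j, y j = 0) → B y = 0)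
    (hB : IsHBLFunction d n dj L B) :
    ∃ c : ℝ, 0 < c ∧ ∀ lam y : Fin n → ℝ, (∀ j, 0 < lam j) → (∀ j, 0 < y j) →
      c * sInf ((fun s : Fin n → ℝ => ∏ j, lam j ^ s j) '' HBLpolytope d n dj L) * B y
        ≤ B (fun j => lam j * y j) :=
  stmt3_general d n dj hdj L B hBnonneg hBmono hB
end
end

section
/- Let d, n, d_1, ..., d_n be positive integers and let L_j : ℝ^d → ℝ^{d_j} (1 ≤ j ≤ n) be surjective linear maps whose Hölder–Brascamp–Lieb polytope 𝒫 is nonempty. If B : [0,∞)^n → [0,∞) is a Borel measurable HBL function for {L_j}, then there exist constants 0 < c ≤ C < ∞ such that c · R^d · B(y_1,...,y_n) ≤ B(R^{d_1} y_1, ..., R^{d_n} y_n) ≤ C · R^d · B(y_1,...,y_n) for all 0 < R < ∞ and all 0 < y_j < ∞. -/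
open MeasureTheory

noncomputable section

/-!
Test the HBL inequality on `f j = y j • 𝟙_{Q j}` with `Q j` the open cube of side `R` in
`ℝ^{d_j}`, whose integrals are `R ^ d_j * y j`: this gives
`B y · |⋂ j, L j ⁻¹' Q j| ≤ C · B (R ^ d_j * y j)`. Since the `L j` are bounded, the
intersection contains a ball of radius `≍ R`, hence has volume `≳ R ^ d`, which is the lower
bound. The upper bound is the lower bound at scale `R⁻¹`, applied to the dilated vector.
-/

open Metric

lemma exists_one_le_forall_norm_apply_le {ι E : Type*} {F : ι → Type*} [Fintype ι]
    [NormedAddCommGroup E] [NormedSpace ℝ E] [FiniteDimensional ℝ E]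
    [∀ i, NormedAddCommGroup (F i)] [∀ i, NormedSpace ℝ (F i)] (L : ∀ i, E →ₗ[ℝ] F i) :
    ∃ K : ℝ, 1 ≤ K ∧ ∀ i x, ‖L i x‖ ≤ K * ‖x‖ := by
  set M : ι → ℝ := fun i => ‖LinearMap.toContinuousLinearMap (L i)‖
  have hM : ∀ i, 0 ≤ M i := fun i => norm_nonneg _
  refine ⟨1 + ∑ i, M i, le_add_of_nonneg_right (Finset.sum_nonneg fun i _ => hM i),
    fun i x => ?_⟩
  have hMi : M i ≤ 1 + ∑ i, M i :=
    (Finset.single_le_sum (fun i _ => hM i) (Finset.mem_univ i)).trans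
      (le_add_of_nonneg_left zero_le_one)
  calc ‖L i x‖ = ‖LinearMap.toContinuousLinearMap (L i) x‖ := rfl
    _ ≤ M i * ‖x‖ := ContinuousLinearMap.le_opNorm _ x
    _ ≤ _ := mul_le_mul_of_nonneg_right hMi (norm_nonneg x)

lemma ball_subset_iInter_preimage_ball {ι E : Type*} {F : ι → Type*}
    [SeminormedAddCommGroup E] [∀ i, SeminormedAddCommGroup (F i)]
    (L : ∀ i, E → F i) {K r : ℝ} (hK : 0 < K) (hL : ∀ i x, ‖L i x‖ ≤ K * ‖x‖) :
    ball 0 (r / K) ⊆ ⋂ i, L i ⁻¹' ball 0 r := by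
  intro x hx
  simp only [Set.mem_iInter, Set.mem_preimage, mem_ball_zero_iff] at hx ⊢
  intro i
  calc ‖L i x‖ ≤ K * ‖x‖ := hL i x
    _ < K * (r / K) := by gcongr
    _ = r := mul_div_cancel₀ r hK.ne'

def IsHBLConstant {d n : ℕ} {dj : Fin n → ℕ}
    (L : (j : Fin n) → (Fin d → ℝ) →ₗ[ℝ] (Fin (dj j) → ℝ)) (B : (Fin n → ℝ) → ℝ) (C : ℝ) :
    Prop :=
  ∀ f : (j : Fin n) → (Fin (dj j) → ℝ) → ℝ, (∀ j, ∀ y, 0 ≤ f j y) → (∀ j, Integrable (f j)) →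
    ∫⁻ x : Fin d → ℝ, ENNReal.ofReal (B fun j => f j (L j x))
      ≤ ENNReal.ofReal (C * B fun j => ∫ y, f j y)

section HBL

variable {d n : ℕ} {dj : Fin n → ℕ} {L : (j : Fin n) → (Fin d → ℝ) →ₗ[ℝ] (Fin (dj j) → ℝ)}
  {B : (Fin n → ℝ) → ℝ} {C : ℝ}

lemma IsHBLConstant.mono (hBnonneg : ∀ y : Fin n → ℝ, (∀ j, 0 ≤ y j) → 0 ≤ B y)
    (hC : IsHBLConstant L B C) {C' : ℝ} (hCC' : C ≤ C') : IsHBLConstant L B C' := by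
  intro f hf hfi
  refine (hC f hf hfi).trans (ENNReal.ofReal_le_ofReal ?_)
  exact mul_le_mul_of_nonneg_right hCC' (hBnonneg _ fun j => integral_nonneg (hf j))

lemma IsHBLFunction.exists_one_le_isHBLConstant
    (hBnonneg : ∀ y : Fin n → ℝ, (∀ j, 0 ≤ y j) → 0 ≤ B y) (hB : IsHBLFunction d n dj L B) :
    ∃ C, 1 ≤ C ∧ IsHBLConstant L B C := by
  obtain ⟨C, hC⟩ := hB
  exact ⟨max C 1, le_max_right C 1, IsHBLConstant.mono hBnonneg hC (le_max_left C 1)⟩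

lemma IsHBLConstant.ofReal_mul_volume_iInter_preimage_le (hC : IsHBLConstant L B C)
    {A : (j : Fin n) → Set (Fin (dj j) → ℝ)} (hA : ∀ j, MeasurableSet (A j))
    (hAfin : ∀ j, volume (A j) ≠ ⊤) {y : Fin n → ℝ} (hy : ∀ j, 0 ≤ y j) :
    ENNReal.ofReal (B y) * volume (⋂ j, L j ⁻¹' A j)
      ≤ ENNReal.ofReal (C * B fun j => volume.real (A j) * y j) := by
  set f : (j : Fin n) → (Fin (dj j) → ℝ) → ℝ := fun j => (A j).indicator fun _ => y j
  have hS : MeasurableSet (⋂ j, L j ⁻¹' A j) :=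
    .iInter fun j => (hA j).preimage (L j).continuous_of_finiteDimensional.measurable
  have hf_on : Set.EqOn (fun _ => ENNReal.ofReal (B y))
      (fun x => ENNReal.ofReal (B fun j => f j (L j x))) (⋂ j, L j ⁻¹' A j) := by
    intro x hx
    simp only [Set.mem_iInter, Set.mem_preimage] at hx
    simp only [f, Set.indicator_of_mem (hx _)]
  have hf_int : (fun j => ∫ z, f j z) = fun j => volume.real (A j) * y j := by
    funext j
    exact integral_indicator_const _ (hA j)
  calc ENNReal.ofReal (B y) * volume (⋂ j, L j ⁻¹' A j)
      = ∫⁻ x in ⋂ j, L j ⁻¹' A j, ENNReal.ofReal (B fun j => f j (L j x)) := by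
        rw [← setLIntegral_const, setLIntegral_congr_fun hS hf_on]
    _ ≤ ∫⁻ x, ENNReal.ofReal (B fun j => f j (L j x)) := setLIntegral_le_lintegral _ _
    _ ≤ _ := by
        refine hf_int ▸ hC f (fun j => Set.indicator_nonneg fun _ _ => hy j) fun j => ?_
        exact (integrable_indicator_iff (hA j)).2 (integrableOn_const (hAfin j))

lemma volume_real_ball_half {k : ℕ} {R : ℝ} (hR : 0 < R) :
    volume.real (ball (0 : Fin k → ℝ) (R / 2)) = R ^ k := by
  rw [measureReal_def, Real.volume_pi_ball _ (half_pos hR), Fintype.card_fin,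
    mul_div_cancel₀ R two_ne_zero, ENNReal.toReal_ofReal (pow_nonneg hR.le k)]

lemma IsHBLConstant.mul_pow_mul_le (hBnonneg : ∀ y : Fin n → ℝ, (∀ j, 0 ≤ y j) → 0 ≤ B y)
    (hC : IsHBLConstant L B C) (hCpos : 0 < C) {K : ℝ} (hK : 0 < K)
    (hL : ∀ j x, ‖L j x‖ ≤ K * ‖x‖) {R : ℝ} (hR : 0 < R) {y : Fin n → ℝ} (hy : ∀ j, 0 ≤ y j) :
    (K ^ d * C)⁻¹ * R ^ d * B y ≤ B fun j => R ^ (dj j) * y j := by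
  have hRy : ∀ j, 0 ≤ R ^ (dj j) * y j := fun j => mul_nonneg (pow_nonneg hR.le _) (hy j)
  have hball : volume (ball (0 : Fin d → ℝ) (R / 2 / K)) = ENNReal.ofReal ((R / K) ^ d) := by
    rw [Real.volume_pi_ball _ (by positivity), Fintype.card_fin, mul_div_assoc',
      mul_div_cancel₀ R two_ne_zero]
  have hmain : ENNReal.ofReal (B y * (R / K) ^ d)
      ≤ ENNReal.ofReal (C * B fun j => R ^ (dj j) * y j) := by
    calc ENNReal.ofReal (B y * (R / K) ^ d)
        = ENNReal.ofReal (B y) * volume (ball (0 : Fin d → ℝ) (R / 2 / K)) := by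
          rw [hball, ENNReal.ofReal_mul (hBnonneg y hy)]
      _ ≤ ENNReal.ofReal (B y) * volume (⋂ j, L j ⁻¹' ball 0 (R / 2)) := by
          gcongr
          exact ball_subset_iInter_preimage_ball (fun j => L j) hK hL
      _ ≤ _ := by
          simpa only [volume_real_ball_half hR] using
            hC.ofReal_mul_volume_iInter_preimage_le (A := fun _ => ball 0 (R / 2))
              (fun _ => measurableSet_ball)
              (fun _ => measure_ball_lt_top.ne) hy
  have hreal := (ENNReal.ofReal_le_ofReal_iff
    (mul_nonneg hCpos.le (hBnonneg _ hRy))).1 hmain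
  calc (K ^ d * C)⁻¹ * R ^ d * B y = C⁻¹ * (B y * (R / K) ^ d) := by
        rw [div_pow]
        field_simp
    _ ≤ C⁻¹ * (C * B fun j => R ^ (dj j) * y j) := by gcongr
    _ = _ := inv_mul_cancel_left₀ hCpos.ne' _

end HBL

lemma le_inv_mul_pow_mul_of_mul_pow_mul_le {ι : Type*} (k : ι → ℕ) (d : ℕ)
    {B : (ι → ℝ) → ℝ} {c : ℝ} (hc : 0 < c)
    (hlower : ∀ R : ℝ, 0 < R → ∀ y : ι → ℝ, (∀ i, 0 < y i) →
      c * R ^ d * B y ≤ B fun i => R ^ (k i) * y i)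
    {R : ℝ} (hR : 0 < R) {y : ι → ℝ} (hy : ∀ i, 0 < y i) :
    (B fun i => R ^ (k i) * y i) ≤ c⁻¹ * R ^ d * B y := by
  have h := hlower R⁻¹ (inv_pos.2 hR) (fun i => R ^ (k i) * y i)
    fun i => mul_pos (pow_pos hR _) (hy i)
  have hundo : (fun i => R⁻¹ ^ (k i) * (R ^ (k i) * y i)) = y := by
    funext i
    rw [inv_pow, inv_mul_cancel_left₀ (pow_ne_zero _ hR.ne')]
  rw [hundo] at h
  calc (B fun i => R ^ (k i) * y i)
      = c⁻¹ * R ^ d * (c * R⁻¹ ^ d * B fun i => R ^ (k i) * y i) := by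
        rw [inv_pow]
        field_simp
    _ ≤ c⁻¹ * R ^ d * B y := by gcongr

theorem stmt4_general (d n : ℕ) (dj : Fin n → ℕ)
    (L : (j : Fin n) → (Fin d → ℝ) →ₗ[ℝ] (Fin (dj j) → ℝ))
    (B : (Fin n → ℝ) → ℝ)
    (hBnonneg : ∀ y : Fin n → ℝ, (∀ j, 0 ≤ y j) → 0 ≤ B y)
    (hB : IsHBLFunction d n dj L B) :
    ∃ c C : ℝ, 0 < c ∧ c ≤ C ∧ ∀ R : ℝ, 0 < R → ∀ y : Fin n → ℝ, (∀ j, 0 < y j) →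
      c * R ^ d * B y ≤ B (fun j => R ^ (dj j) * y j) ∧
      B (fun j => R ^ (dj j) * y j) ≤ C * R ^ d * B y := by
  obtain ⟨C, hC1, hC⟩ := hB.exists_one_le_isHBLConstant hBnonneg
  obtain ⟨K, hK1, hK⟩ := exists_one_le_forall_norm_apply_le L
  have hKC : 1 ≤ K ^ d * C := one_le_mul_of_one_le_of_one_le (one_le_pow₀ hK1) hC1
  have hlower : ∀ R : ℝ, 0 < R → ∀ y : Fin n → ℝ, (∀ j, 0 < y j) →
      (K ^ d * C)⁻¹ * R ^ d * B y ≤ B fun j => R ^ (dj j) * y j := fun R hR y hy =>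
    hC.mul_pow_mul_le hBnonneg (by positivity) (by positivity) hK hR fun j => (hy j).le
  refine ⟨(K ^ d * C)⁻¹, K ^ d * C, by positivity,
    (inv_le_one_of_one_le₀ hKC).trans hKC, fun R hR y hy => ⟨hlower R hR y hy, ?_⟩⟩
  simpa only [inv_inv] using
    le_inv_mul_pow_mul_of_mul_pow_mul_le dj d (by positivity) hlower hR hy

theorem stmt4 (d n : ℕ) (hd : 0 < d) (hn : 0 < n) (dj : Fin n → ℕ) (hdj : ∀ j, 0 < dj j)
    (L : (j : Fin n) → (Fin d → ℝ) →ₗ[ℝ] (Fin (dj j) → ℝ))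
    (hL : ∀ j, Function.Surjective (L j))
    (hP : (HBLpolytope d n dj L).Nonempty)
    (B : (Fin n → ℝ) → ℝ) (hBmeas : Measurable B)
    (hBnonneg : ∀ y : Fin n → ℝ, (∀ j, 0 ≤ y j) → 0 ≤ B y)
    (hB : IsHBLFunction d n dj L B) :
    ∃ c C : ℝ, 0 < c ∧ c ≤ C ∧ ∀ R : ℝ, 0 < R → ∀ y : Fin n → ℝ, (∀ j, 0 < y j) →
      c * R ^ d * B y ≤ B (fun j => R ^ (dj j) * y j) ∧
      B (fun j => R ^ (dj j) * y j) ≤ C * R ^ d * B y :=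
  stmt4_general d n dj L B hBnonneg hB
end
end

section
/- Let d ≥ 1 and let E_1, ..., E_k be linear subspaces of ℝ^d. Then: (a) for every choice of nonnegative rationals y_1, ..., y_k and rational y_0 (a weight attached to ℝ^d), there exist a flag of subspaces W_1 ⊊ W_2 ⊊ ... ⊊ W_t = ℝ^d and rationals z_1, ..., z_t with z_i ≥ 0 for all i < t, such that ∑_{i=1}^t z_i dim W_i = y_0 · d + ∑_{i=1}^k y_i dim E_i, and such that for every finite-dimensional real vector space V' and every linear map L : ℝ^d → V', ∑_{i=1}^t z_i dim L(W_i) ≤ y_0 · dim L(ℝ^d) + ∑_{i=1}^k y_i dim L(E_i); (b) moreover, there is a finite collection E' of subspaces of ℝ^d, depending only on (E_1,...,E_k), such that the subspaces W_1,...,W_t in (a) may always be chosen from E', uniformly over all choices of (y_0, y_1, ..., y_k). -/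
/-!
For natural weights `c i` one stacks the subspaces into a decreasing sequence
`G 0 ≥ G 1 ≥ ⋯`: inserting `E` with multiplicity `c` into `G` gives
`H s = G s ⊔ (E ⊓ I s)`, where `I` is `G` preceded by `c` copies of `⊤`. Since `G s ≤ I s`,
submodularity of `A ↦ dim L(A)` at `G s` and `E ⊓ I s` gives
`∑ dim L(H s) ≤ c · dim L(E) + ∑ dim L(G s)`, with equality for `L = id` because `dim` is modular.
All layers lie in the finite set obtained from `{⊥, ⊤}` by the operations `(a, b) ↦ a ⊔ (E i ⊓ b)`,
which depends only on the `E i`; they form a chain, hence a flag whose weights are the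
multiplicities of the layers. Rational weights are handled by clearing denominators,
and `y0` is put on the top space.
-/

open Finset Module

theorem exists_pos_nat_mul_eq_natCast {ι : Type*} [Fintype ι] (y : ι → ℚ) (hy : ∀ i, 0 ≤ y i) :
    ∃ N : ℕ, 0 < N ∧ ∃ n : ι → ℕ, ∀ i, (n i : ℚ) = N * y i := by
  refine ⟨∏ i, (y i).den, prod_pos fun i _ => (y i).den_pos,
    fun i => (y i).num.toNat * ((∏ j, (y j).den) / (y i).den), fun i => ?_⟩
  have hnum : (((y i).num.toNat : ℤ) : ℚ) = (y i).num := by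
    rw [Int.toNat_of_nonneg (Rat.num_nonneg.2 (hy i))]
  have hden : ((y i).den : ℚ) ≠ 0 := Nat.cast_ne_zero.2 (y i).den_nz
  rw [Nat.cast_mul, Nat.cast_div (dvd_prod_of_mem _ (mem_univ i)) hden, ← Int.cast_natCast, hnum]
  nth_rw 3 [← Rat.num_div_den (y i)]
  field_simp

theorem sum_card_filter_mul_eq {ι κ R : Type*} [DecidableEq κ] [Semiring R] {s : Finset ι}
    {t : Finset κ} {g : ι → κ} (h : ∀ i ∈ s, g i ∈ t) (f : κ → R) :
    ∑ j ∈ t, (#{i ∈ s | g i = j} : R) * f j = ∑ i ∈ s, f (g i) := by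
  rw [← sum_fiberwise_of_maps_to h]
  refine sum_congr rfl fun j _ => ?_
  rw [sum_congr rfl fun i hi => congrArg f (mem_filter.1 hi).2, sum_const, nsmul_eq_mul]

theorem sum_range_add_eq_of_eq_zero {M : Type*} [AddCommMonoid M] {g : ℕ → M} {N : ℕ}
    (hg : ∀ s, N ≤ s → g s = 0) (c : ℕ) :
    ∑ s ∈ range (c + N), g s = ∑ s ∈ range N, g s :=
  (sum_subset (range_subset_range.2 (Nat.le_add_left N c))
    fun s _ hs => hg s (by simpa using hs)).symm

section Lattice

variable {α : Type*} [Lattice α] [BoundedOrder α]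

def IsSubmodular {M : Type*} [Add M] [LE M] (f : α → M) : Prop :=
  ∀ a b, f (a ⊔ b) + f (a ⊓ b) ≤ f a + f b

open Classical in
noncomputable def flagCandidates : List α → Finset α
  | [] => {⊥, ⊤}
  | E :: l => (flagCandidates l ×ˢ flagCandidates l).image fun p => p.1 ⊔ (E ⊓ p.2)

theorem top_mem_flagCandidates (l : List α) : ⊤ ∈ flagCandidates l := by
  classical
  induction l with
  | nil => simp [flagCandidates]
  | cons E l ih =>
    rw [flagCandidates, mem_image]
    exact ⟨(⊤, ⊤), mem_product.2 ⟨ih, ih⟩, by simp⟩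

def padTop (c : ℕ) (G : ℕ → α) (s : ℕ) : α :=
  if s < c then ⊤ else G (s - c)

theorem padTop_antitone {G : ℕ → α} (hG : Antitone G) (c : ℕ) : Antitone (padTop c G) := by
  intro s s' hss'
  unfold padTop
  split_ifs <;> first | exact le_top | omega | exact hG (by omega)

theorem le_padTop {G : ℕ → α} (hG : Antitone G) (c s : ℕ) : G s ≤ padTop c G s := by
  unfold padTop
  split_ifs
  · exact le_top
  · exact hG (Nat.sub_le s c)

def layers : List (α × ℕ) → ℕ → α
  | [] => fun _ => ⊥
  | (E, c) :: l => fun s => layers l s ⊔ (E ⊓ padTop c (layers l) s)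

theorem layers_antitone : ∀ l : List (α × ℕ), Antitone (layers l)
  | [] => fun _ _ _ => le_rfl
  | (E, c) :: l => fun _ _ h =>
    sup_le_sup (layers_antitone l h) (inf_le_inf_left E (padTop_antitone (layers_antitone l) c h))

theorem layers_eq_bot : ∀ (l : List (α × ℕ)) {s : ℕ}, (l.map Prod.snd).sum ≤ s → layers l s = ⊥
  | [], _, _ => rfl
  | (E, c) :: l, s, hs => by
    simp only [List.map_cons, List.sum_cons] at hs
    have hG : layers l (s - c) = ⊥ := layers_eq_bot l (by omega)
    simp [layers, padTop, layers_eq_bot l (by omega : _ ≤ s), hG, show ¬ s < c by omega]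

theorem layers_mem_flagCandidates :
    ∀ (l : List (α × ℕ)) (s : ℕ), layers l s ∈ flagCandidates (l.map Prod.fst)
  | [], s => by simp [layers, flagCandidates]
  | (E, c) :: l, s => by
    classical
    rw [List.map_cons, flagCandidates, mem_image]
    refine ⟨(layers l s, padTop c (layers l) s),
      mem_product.2 ⟨layers_mem_flagCandidates l s, ?_⟩, rfl⟩
    unfold padTop
    split_ifs
    · exact top_mem_flagCandidates _
    · exact layers_mem_flagCandidates l _

theorem sum_range_padTop {M : Type*} [AddCommMonoid M] (f : α → M) (E : α) (G : ℕ → α)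
    (c N : ℕ) :
    ∑ s ∈ range (c + N), f (E ⊓ padTop c G s) = c • f E + ∑ s ∈ range N, f (E ⊓ G s) := by
  rw [sum_range_add]
  congr 1
  · rw [sum_congr rfl (g := fun _ => f E) fun s hs => by simp [padTop, mem_range.1 hs],
      sum_const, card_range]
  · simp [padTop]

theorem sum_layers_le {M : Type*} [AddCommMonoid M] [PartialOrder M] [IsOrderedCancelAddMonoid M]
    {f : α → M} (hf : IsSubmodular f) (hbot : f ⊥ = 0) :
    ∀ l : List (α × ℕ),
      ∑ s ∈ range (l.map Prod.snd).sum, f (layers l s) ≤ (l.map fun p => p.2 • f p.1).sum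
  | [] => by simp
  | (E, c) :: l => by
    set G := layers l
    set N := (l.map Prod.snd).sum
    have hvanish : ∀ s, N ≤ s → G s = ⊥ := fun s => layers_eq_bot l
    have hpoint : ∀ s, f (G s ⊔ (E ⊓ padTop c G s)) + f (E ⊓ G s)
        ≤ f (G s) + f (E ⊓ padTop c G s) := by
      intro s
      have hmeet : G s ⊓ (E ⊓ padTop c G s) = E ⊓ G s := by
        rw [inf_left_comm, inf_eq_left.2 (le_padTop (layers_antitone l) c s)]
      simpa [hmeet] using hf (G s) (E ⊓ padTop c G s)
    have hsum := sum_le_sum fun s (_ : s ∈ range (c + N)) => hpoint s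
    rw [sum_add_distrib, sum_add_distrib, sum_range_padTop,
      sum_range_add_eq_of_eq_zero (g := fun s => f (G s)) (fun s hs => by rw [hvanish s hs, hbot]),
      sum_range_add_eq_of_eq_zero (g := fun s => f (E ⊓ G s))
        (fun s hs => by rw [hvanish s hs, inf_bot_eq, hbot]),
      add_left_comm, ← add_assoc] at hsum
    simp only [List.map_cons, List.sum_cons]
    calc _ ≤ c • f E + ∑ s ∈ range N, f (G s) := le_of_add_le_add_right hsum
      _ ≤ _ := add_le_add le_rfl (sum_layers_le hf hbot l)

theorem exists_chain_weighted_sum_le {k : ℕ} (E : Fin k → α) (y : Fin k → ℚ) (hy : ∀ i, 0 ≤ y i) :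
    ∃ (T : Finset α) (w : α → ℚ), IsChain (· ≤ ·) (T : Set α) ∧ ⊤ ∈ T ∧
      T ⊆ flagCandidates (List.ofFn E) ∧ (∀ A, 0 ≤ w A) ∧
      ∀ f : α → ℚ, IsSubmodular f → f ⊥ = 0 → ∑ A ∈ T, w A * f A ≤ ∑ i, y i * f (E i) := by
  classical
  obtain ⟨N₀, hN₀, n, hn⟩ := exists_pos_nat_mul_eq_natCast y hy
  set l := List.ofFn fun i => (E i, n i)
  set N := (l.map Prod.snd).sum
  refine ⟨insert ⊤ ((range N).image (layers l)), fun A => #{s ∈ range N | layers l s = A} / N₀,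
    ?_, mem_insert_self _ _, ?_, fun A => by positivity, fun f hf hbot => ?_⟩
  · rw [coe_insert, coe_image]
    exact ((layers_antitone l).isChain_range.mono (Set.image_subset_range _ _)).insert
      fun _ _ _ => Or.inr le_top
  · intro A hA
    rcases mem_insert.1 hA with rfl | hA
    · exact top_mem_flagCandidates _
    · obtain ⟨s, _, rfl⟩ := mem_image.1 hA
      simpa [l, List.map_ofFn, Function.comp_def] using layers_mem_flagCandidates l s
  · have hle : ∑ s ∈ range N, f (layers l s) ≤ ∑ i, n i • f (E i) :=
      (sum_layers_le hf hbot l).trans_eq (by rw [List.map_ofFn, List.sum_ofFn]; rfl)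
    calc ∑ A ∈ insert ⊤ ((range N).image (layers l)),
          #{s ∈ range N | layers l s = A} / (N₀ : ℚ) * f A
        = (∑ s ∈ range N, f (layers l s)) / N₀ := by
          simp_rw [div_mul_eq_mul_div, ← sum_div]
          congr 1
          exact sum_card_filter_mul_eq (fun s hs => mem_insert_of_mem (mem_image_of_mem _ hs)) f
      _ ≤ (∑ i, n i • f (E i)) / N₀ := div_le_div_of_nonneg_right hle (by positivity)
      _ = ∑ i, y i * f (E i) := by
          simp_rw [nsmul_eq_mul, hn, sum_div]
          exact sum_congr rfl fun i _ => by field_simp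

end Lattice

theorem IsChain.exists_strictMono_fin {α : Type*} [PartialOrder α] [OrderTop α] [DecidableEq α]
    {T : Finset α} (hT : IsChain (· ≤ ·) (T : Set α)) (htop : ⊤ ∈ T) :
    ∃ (t : ℕ) (W : Fin (t + 1) → α), StrictMono W ∧ W (Fin.last t) = ⊤ ∧ univ.image W = T := by
  classical
  let := hT.linearOrder
  obtain ⟨t, ht⟩ : ∃ t, Fintype.card (T : Set α) = t + 1 :=
    Nat.exists_eq_add_one.2 (Fintype.card_pos_iff.2 ⟨⟨⊤, htop⟩⟩)
  let e := monoEquivOfFin (T : Set α) ht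
  refine ⟨t, fun i => e i, (Subtype.strictMono_coe _).comp e.strictMono, ?_, ?_⟩
  · exact top_unique (show (⟨⊤, htop⟩ : (T : Set α)) ≤ e (Fin.last t) from
      e.symm_apply_le.1 (Fin.le_last _))
  · ext A
    simp only [mem_image, mem_univ, true_and]
    exact ⟨fun ⟨i, hi⟩ => hi ▸ (e i).2, fun hA => ⟨e.symm ⟨A, hA⟩, by simp⟩⟩

section Finrank

variable {K V : Type*} [DivisionRing K] [AddCommGroup V] [Module K V] [FiniteDimensional K V]

theorem finrank_sup_add_finrank_inf_eq_rat (A B : Submodule K V) :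
    (finrank K ↥(A ⊔ B) : ℚ) + finrank K ↥(A ⊓ B) = finrank K A + finrank K B := by
  exact_mod_cast Submodule.finrank_sup_add_finrank_inf_eq A B

theorem isSubmodular_finrank : IsSubmodular fun A : Submodule K V => (finrank K A : ℚ) :=
  fun A B => (finrank_sup_add_finrank_inf_eq_rat A B).le

theorem isSubmodular_neg_finrank : IsSubmodular fun A : Submodule K V => -(finrank K A : ℚ) :=
  fun A B => by linarith [finrank_sup_add_finrank_inf_eq_rat A B]

theorem isSubmodular_finrank_map {V' : Type*} [AddCommGroup V'] [Module K V']
    (L : V →ₗ[K] V') : IsSubmodular fun A : Submodule K V => (finrank K (A.map L) : ℚ) := by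
  intro A B
  have hmod := Submodule.finrank_sup_add_finrank_inf_eq (A.map L) (B.map L)
  have hinf := Submodule.finrank_mono (Submodule.map_inf_le L (p := A) (q := B))
  dsimp only
  rw [Submodule.map_sup]
  exact_mod_cast (by omega : _ ≤ finrank K (A.map L) + finrank K (B.map L))

end Finrank

theorem stmt9_general (d k : ℕ) (E : Fin k → Submodule ℝ (Fin d → ℝ)) :
    ∃ E' : Finset (Submodule ℝ (Fin d → ℝ)),
      ∀ (y0 : ℚ) (y : Fin k → ℚ), (∀ i, 0 ≤ y i) →
        ∃ (t : ℕ) (W : Fin (t + 1) → Submodule ℝ (Fin d → ℝ)) (z : Fin (t + 1) → ℚ),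
          (∀ i, W i ∈ E') ∧
          (∀ i j : Fin (t + 1), i < j → W i < W j) ∧
          W (Fin.last t) = ⊤ ∧
          (∀ i : Fin (t + 1), i ≠ Fin.last t → 0 ≤ z i) ∧
          (∑ i, z i * (Module.finrank ℝ (W i) : ℚ))
            = y0 * (d : ℚ) + ∑ i, y i * (Module.finrank ℝ (E i) : ℚ) ∧
          ∀ (V' : Type) [AddCommGroup V'] [Module ℝ V'] [FiniteDimensional ℝ V']
            (L : (Fin d → ℝ) →ₗ[ℝ] V'),
            (∑ i, z i * (Module.finrank ℝ ((W i).map L) : ℚ))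
              ≤ y0 * (Module.finrank ℝ ((⊤ : Submodule ℝ (Fin d → ℝ)).map L) : ℚ)
                + ∑ i, y i * (Module.finrank ℝ ((E i).map L) : ℚ) := by
  classical
  refine ⟨flagCandidates (List.ofFn E), fun y0 y hy => ?_⟩
  obtain ⟨T, w, hchain, htop, hTE, hw, hle⟩ := exists_chain_weighted_sum_le E y hy
  obtain ⟨t, W, hW, hWlast, hWT⟩ := hchain.exists_strictMono_fin htop
  have hsum (g : Submodule ℝ (Fin d → ℝ) → ℚ) :
      ∑ i, (w (W i) + if i = Fin.last t then y0 else 0) * g (W i)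
        = ∑ A ∈ T, w A * g A + y0 * g ⊤ := by
    simp_rw [add_mul, sum_add_distrib, ite_mul, zero_mul, sum_ite_eq', if_pos (mem_univ _), hWlast]
    rw [← hWT, sum_image hW.injective.injOn]
  refine ⟨t, W, fun i => w (W i) + if i = Fin.last t then y0 else 0,
    fun i => hTE (hWT ▸ mem_image_of_mem W (mem_univ i)), fun i j => @hW i j,
    hWlast, fun i hi => by simpa [hi] using hw (W i), ?_, fun V' _ _ _ L => ?_⟩
  · -- `dim` is modular, so both `dim` and `-dim` are submodular
    have hdim : ∑ A ∈ T, w A * finrank ℝ A = ∑ i, y i * (finrank ℝ (E i) : ℚ) :=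
      le_antisymm (hle _ isSubmodular_finrank (by simp))
        (by simpa using hle _ isSubmodular_neg_finrank (by simp))
    refine (hsum fun A => (finrank ℝ A : ℚ)).trans ?_
    rw [hdim, finrank_top, finrank_fin_fun]
    ring
  · refine (hsum fun A => (finrank ℝ (A.map L) : ℚ)).trans_le ?_
    linarith [hle _ (isSubmodular_finrank_map L) (by simp)]

theorem stmt9 (d k : ℕ) (hd : 0 < d) (E : Fin k → Submodule ℝ (Fin d → ℝ)) :
    ∃ E' : Finset (Submodule ℝ (Fin d → ℝ)),
      ∀ (y0 : ℚ) (y : Fin k → ℚ), (∀ i, 0 ≤ y i) →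
        ∃ (t : ℕ) (W : Fin (t + 1) → Submodule ℝ (Fin d → ℝ)) (z : Fin (t + 1) → ℚ),
          (∀ i, W i ∈ E') ∧
          (∀ i j : Fin (t + 1), i < j → W i < W j) ∧
          W (Fin.last t) = ⊤ ∧
          (∀ i : Fin (t + 1), i ≠ Fin.last t → 0 ≤ z i) ∧
          (∑ i, z i * (Module.finrank ℝ (W i) : ℚ))
            = y0 * (d : ℚ) + ∑ i, y i * (Module.finrank ℝ (E i) : ℚ) ∧
          ∀ (V' : Type) [AddCommGroup V'] [Module ℝ V'] [FiniteDimensional ℝ V']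
            (L : (Fin d → ℝ) →ₗ[ℝ] V'),
            (∑ i, z i * (Module.finrank ℝ ((W i).map L) : ℚ))
              ≤ y0 * (Module.finrank ℝ ((⊤ : Submodule ℝ (Fin d → ℝ)).map L) : ℚ)
                + ∑ i, y i * (Module.finrank ℝ ((E i).map L) : ℚ) :=
  stmt9_general d k E
end

section
/- Let V be a linear subspace of ℝ^d and let W_1 ⊆ W_2 ⊆ ... ⊆ W_t be a chain of linear subspaces of ℝ^d. Then the smallest collection of subspaces of ℝ^d that contains {V, W_1, ..., W_t} and is closed under pairwise sum and pairwise intersection is finite; indeed, it is contained in the explicit finite set {V} ∪ {W_i : 1 ≤ i ≤ t} ∪ {V + W_i : 1 ≤ i ≤ t} ∪ {V ∩ W_i : 1 ≤ i ≤ t} ∪ {W_i + (V ∩ W_j) : 1 ≤ i < j ≤ t}. -/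
/-!
Put `W₀ = 0` below the chain. In any modular lattice, the elements `V ⊔ W i` and
`W i ⊔ (V ⊓ W j)` with `i ≤ j` already form a sublattice: this description makes closure under
`⊔` evident, and the modular law rewrites `W i ⊔ (V ⊓ W j)` as `W j ⊓ (V ⊔ W i)`, which makes
closure under `⊓` evident as well. With `W₀ = 0` and `j ≥ 1` these elements are exactly the listed subspaces.
-/

section ChainSpan

variable {α κ : Type*} [Lattice α] [LinearOrder κ] {V : α} {c : κ → α}

/-- Restricting `j` to `J` keeps `c i ⊔ (V ⊓ c j)` away from indices such as an adjoined bottom,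
where it would not be one of the listed subspaces. -/
def chainSpan (V : α) (c : κ → α) (J : Set κ) : Set α :=
  {U | (∃ i, U = V ⊔ c i) ∨ ∃ i, ∃ j ∈ J, i ≤ j ∧ U = c i ⊔ (V ⊓ c j)}

theorem sup_mem_chainSpan (J : Set κ) (i : κ) : V ⊔ c i ∈ chainSpan V c J :=
  Or.inl ⟨i, rfl⟩

theorem sup_inf_eq_inf_sup_of_le [IsModularLattice α] (hc : Monotone c) {i j : κ} (hij : i ≤ j) :
    c i ⊔ (V ⊓ c j) = c j ⊓ (V ⊔ c i) := by
  rw [← sup_inf_assoc_of_le V (hc hij), inf_comm, sup_comm]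

theorem inf_sup_mem_chainSpan [IsModularLattice α] (hc : Monotone c) {J : Set κ} {i j : κ}
    (hij : i ≤ j) (hj : j ∈ J) : c j ⊓ (V ⊔ c i) ∈ chainSpan V c J :=
  Or.inr ⟨i, j, hj, hij, (sup_inf_eq_inf_sup_of_le hc hij).symm⟩

theorem supClosed_chainSpan (hc : Monotone c) (J : Set κ) : SupClosed (chainSpan V c J) := by
  have hV : Monotone fun j => V ⊓ c j := fun _ _ h => inf_le_inf_left V (hc h)
  have sup_sup_inf (i k l : κ) : (V ⊔ c i) ⊔ (c k ⊔ (V ⊓ c l)) = V ⊔ c (max i k) := by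
    rw [← sup_assoc, sup_eq_left.2 (inf_le_left.trans (le_sup_left.trans le_sup_left)),
      sup_assoc, hc.map_sup]
  rintro _ (⟨i, rfl⟩ | ⟨i, j, hj, hij, rfl⟩) _ (⟨k, rfl⟩ | ⟨k, l, hl, hkl, rfl⟩)
  · exact Or.inl ⟨max i k, by rw [hc.map_sup, sup_sup_distrib_left V]⟩
  · exact Or.inl ⟨max i k, sup_sup_inf i k l⟩
  · exact Or.inl ⟨max k i, by rw [sup_comm, sup_sup_inf]⟩
  · refine Or.inr ⟨max i k, max j l, max_rec' _ hj hl, max_le_max hij hkl, ?_⟩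
    rw [sup_sup_sup_comm, hc.map_sup, hV.map_sup]

theorem infClosed_chainSpan [IsModularLattice α] (hc : Monotone c) (J : Set κ) :
    InfClosed (chainSpan V c J) := by
  have hA : Monotone fun i => V ⊔ c i := fun _ _ h => sup_le_sup_left (hc h) V
  rintro _ (⟨i, rfl⟩ | ⟨i, j, hj, hij, rfl⟩) _ (⟨k, rfl⟩ | ⟨k, l, hl, hkl, rfl⟩)
  · rw [← hA.map_inf]
    exact sup_mem_chainSpan J _
  · rw [sup_inf_eq_inf_sup_of_le hc hkl, inf_left_comm, ← hA.map_inf]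
    exact inf_sup_mem_chainSpan hc (min_le_of_right_le hkl) hl
  · rw [sup_inf_eq_inf_sup_of_le hc hij, inf_assoc, ← hA.map_inf]
    exact inf_sup_mem_chainSpan hc (min_le_of_left_le hij) hj
  · rw [sup_inf_eq_inf_sup_of_le hc hij, sup_inf_eq_inf_sup_of_le hc hkl, inf_inf_inf_comm, ← hc.map_inf, ← hA.map_inf]
    exact inf_sup_mem_chainSpan hc (min_le_min hij hkl) (min_rec' _ hj hl)

theorem chainSpan_finite [Finite κ] (V : α) (c : κ → α) (J : Set κ) :
    (chainSpan V c J).Finite := by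
  refine ((Set.finite_range fun i => V ⊔ c i).union
    (Set.finite_range fun p : κ × κ => c p.1 ⊔ (V ⊓ c p.2))).subset ?_
  rintro _ (⟨i, rfl⟩ | ⟨i, j, -, -, rfl⟩)
  exacts [Or.inl ⟨i, rfl⟩, Or.inr ⟨(i, j), rfl⟩]

end ChainSpan

section BotExtension

variable {α ι : Type*} [Lattice α] [OrderBot α] [LinearOrder ι] {V : α} {W : ι → α}

theorem monotone_recBotCoe_bot (hW : Monotone W) :
    Monotone (WithBot.recBotCoe ⊥ W : WithBot ι → α) :=
  WithBot.monotone_iff.2 ⟨hW, fun _ => bot_le⟩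

theorem union_range_subset_chainSpan_recBotCoe :
    {V} ∪ Set.range W ⊆ chainSpan V (WithBot.recBotCoe ⊥ W) (Set.range ((↑) : ι → WithBot ι)) := by
  rintro _ (rfl | ⟨i, rfl⟩)
  · exact Or.inl ⟨⊥, by simp⟩
  · exact Or.inr ⟨i, i, ⟨i, rfl⟩, le_rfl, by simp⟩

theorem chainSpan_recBotCoe_subset :
    chainSpan V (WithBot.recBotCoe ⊥ W) (Set.range ((↑) : ι → WithBot ι)) ⊆
      {V} ∪ Set.range W ∪ (Set.range fun i => V ⊔ W i) ∪ (Set.range fun i => V ⊓ W i)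
        ∪ {U | ∃ i j : ι, i < j ∧ U = W i ⊔ (V ⊓ W j)} := by
  rintro _ (⟨i, rfl⟩ | ⟨i, _, ⟨j, rfl⟩, hij, rfl⟩)
  · induction i using WithBot.recBotCoe with
    | bot => simp
    | coe i => exact Or.inl (Or.inl (Or.inr ⟨i, rfl⟩))
  · induction i using WithBot.recBotCoe with
    | bot => exact Or.inl (Or.inr ⟨j, by simp⟩)
    | coe i =>
      obtain hij | rfl := (WithBot.coe_le_coe.mp hij).lt_or_eq
      · exact Or.inr ⟨i, j, hij, rfl⟩
      · exact Or.inl (Or.inl (Or.inl (Or.inr ⟨i, by simp⟩)))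

end BotExtension

theorem stmt10 (d t : ℕ) (V : Submodule ℝ (Fin d → ℝ))
    (W : Fin t → Submodule ℝ (Fin d → ℝ)) (hW : Monotone W) :
    (⋂₀ {S : Set (Submodule ℝ (Fin d → ℝ)) |
        ({V} ∪ Set.range W) ⊆ S ∧ ∀ A ∈ S, ∀ B ∈ S, A ⊔ B ∈ S ∧ A ⊓ B ∈ S}).Finite ∧
    (⋂₀ {S : Set (Submodule ℝ (Fin d → ℝ)) |
        ({V} ∪ Set.range W) ⊆ S ∧ ∀ A ∈ S, ∀ B ∈ S, A ⊔ B ∈ S ∧ A ⊓ B ∈ S})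
      ⊆ ({V} ∪ Set.range W ∪ (Set.range fun i => V ⊔ W i) ∪ (Set.range fun i => V ⊓ W i)
          ∪ {U | ∃ i j : Fin t, i < j ∧ U = W i ⊔ (V ⊓ W j)}) := by
  have hc := monotone_recBotCoe_bot hW
  have hsub : ⋂₀ {S : Set (Submodule ℝ (Fin d → ℝ)) |
      ({V} ∪ Set.range W) ⊆ S ∧ ∀ A ∈ S, ∀ B ∈ S, A ⊔ B ∈ S ∧ A ⊓ B ∈ S} ⊆
      chainSpan V (WithBot.recBotCoe ⊥ W) (Set.range ((↑) : Fin t → WithBot (Fin t))) :=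
    Set.sInter_subset_of_mem ⟨union_range_subset_chainSpan_recBotCoe, fun A hA B hB =>
      ⟨supClosed_chainSpan hc _ hA hB, infClosed_chainSpan hc _ hA hB⟩⟩
  exact ⟨(chainSpan_finite _ _ _).subset hsub, hsub.trans chainSpan_recBotCoe_subset⟩
end

section
/- Let Y_1, ..., Y_t be linear subspaces of ℝ^d with ℝ^d = Y_1 ⊕ ... ⊕ Y_t (internal direct sum), fix a basis {v_i^1, ..., v_i^{j_i}} of each Y_i, and set W_0 = {0}, W_i = Y_1 + ... + Y_i for 1 ≤ i ≤ t. Let L : ℝ^d → ℝ^{d'} be a linear map and set c_i = dim L(W_i) − dim L(W_{i−1}). For y ∈ ℝ^t let S_y = {∑_{i=1}^t ∑_{j=1}^{j_i} a_i^j v_i^j : 0 ≤ a_i^j ≤ e^{y_i}}. Then there exists C < ∞, depending only on L and the chosen bases, such that for every y = (y_1,...,y_t) ∈ ℝ^t with y_1 ≥ y_2 ≥ ... ≥ y_t, the Lebesgue measure of L(S_y) in ℝ^{d'} satisfies |L(S_y)| ≤ C · e^{∑_{i=1}^t y_i c_i}. -/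
/-!
Put `U k = L(W k)`. If `U t` is a proper subspace, it contains `L(S_y)`, which is then null.
Otherwise pick a basis of `ℝ^{d'}` adapted to the flag `0 = U 0 ≤ U 1 ≤ ⋯ ≤ U t = ℝ^{d'}`,
with `c i` vectors at level `i`. Since `L v_i^j ∈ U (i+1)` has coordinates only at levels `≤ i`
and `y` is antitone, the coordinates of points of `L(S_y)` at level `k` are `O(e^{y k})`. Hence
`L(S_y)` lies in a linear image of a box of volume `O(∏ k, e^{c k y k})`.
-/

open MeasureTheory

noncomputable section

/-- The parallelepiped `S_y` spanned by the basis vectors `v i j` of the subspaces `Y i`,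
with side lengths `e^{y_i}` in the directions coming from `Y i`. -/
def Spar (d t : ℕ) (m : Fin t → ℕ) (Y : Fin t → Submodule ℝ (Fin d → ℝ))
    (v : (i : Fin t) → Module.Basis (Fin (m i)) ℝ (Y i)) (y : Fin t → ℝ) : Set (Fin d → ℝ) :=
  {x | ∃ a : (i : Fin t) → Fin (m i) → ℝ,
    (∀ i j, a i j ∈ Set.Icc (0 : ℝ) (Real.exp (y i))) ∧
    x = ∑ i, ∑ j, a i j • ((v i j : Fin d → ℝ))}

theorem Fin.apply_last_eq_apply_zero_add_sum {M : Type*} [AddCommMonoid M] {t : ℕ}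
    {f : Fin (t + 1) → M} {g : Fin t → M} (h : ∀ i, f i.succ = f i.castSucc + g i) :
    f (Fin.last t) = f 0 + ∑ i, g i := by
  induction t with
  | zero => simp
  | succ t ih =>
    have h' : ∀ i : Fin t, f i.succ.castSucc = f i.castSucc.castSucc + g i.castSucc := fun i => by
      rw [← Fin.succ_castSucc, h]
    rw [← Fin.succ_last, h, Fin.sum_univ_castSucc, ← add_assoc, ← Fin.castSucc_zero]
    exact congrArg (· + g (Fin.last t)) (ih (f := f ∘ Fin.castSucc) (g := g ∘ Fin.castSucc) h')

theorem abs_sum_sum_mul_le_of_antitone {ι : Type*} [Fintype ι] [Preorder ι] {α : ι → Type*}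
    [∀ i, Fintype (α i)] {a r : (i : ι) → α i → ℝ} {M : ι → ℝ} (hM : Antitone M) (k : ι)
    (ha : ∀ i j, |a i j| ≤ M i) (hr : ∀ i j, r i j ≠ 0 → k ≤ i) :
    |∑ i, ∑ j, a i j * r i j| ≤ M k * ∑ i, ∑ j, |r i j| := by
  rw [Finset.mul_sum]
  refine (Finset.abs_sum_le_sum_abs _ _).trans (Finset.sum_le_sum fun i _ => ?_)
  rw [Finset.mul_sum]
  refine (Finset.abs_sum_le_sum_abs _ _).trans (Finset.sum_le_sum fun j _ => ?_)
  rw [abs_mul]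
  by_cases h : r i j = 0
  · simp [h]
  · exact mul_le_mul_of_nonneg_right ((ha i j).trans (hM (hr i j h))) (abs_nonneg _)

open Module Submodule in
theorem exists_basis_sigma_adapted_to_flag {K E : Type*} [Field K] [AddCommGroup E] [Module K E]
    [FiniteDimensional K E] {t : ℕ} {U : Fin (t + 1) → Submodule K E} (hU : Monotone U)
    (h0 : U 0 = ⊥) (hlast : U (Fin.last t) = ⊤) :
    ∃ (n : Fin t → ℕ) (B : Basis (Σ i, Fin (n i)) K E),
      (∀ i, finrank K (U i.succ) = finrank K (U i.castSucc) + n i) ∧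
      ∀ k, U k ≤ span K (B '' {σ | σ.1.castSucc < k}) := by
  choose V hdisj hsup using fun i : Fin t =>
    IsModularLattice.exists_disjoint_and_sup_eq (hU i.castSucc_le_succ)
  let u : (Σ i, Fin (finrank K (V i))) → E := fun σ => finBasis K (V σ.1) σ.2
  have hrank : ∀ i, finrank K (U i.succ) = finrank K (U i.castSucc) + finrank K (V i) := by
    intro i
    have := finrank_sup_add_finrank_inf_eq (U i.castSucc) (V i)
    rwa [hsup, (hdisj i).eq_bot, finrank_bot, add_zero] at this
  have hspan : ∀ k, U k ≤ span K (u '' {σ | σ.1.castSucc < k}) := by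
    intro k
    induction k using Fin.induction with
    | zero => simp [h0]
    | succ i ih =>
      rw [← hsup i, sup_le_iff]
      constructor
      · exact ih.trans (span_mono (Set.image_mono fun σ hσ => hσ.trans i.castSucc_lt_succ))
      · rw [← map_subtype_top (V i), ← (finBasis K (V i)).span_eq, map_span, span_le]
        rintro _ ⟨_, ⟨j, rfl⟩, rfl⟩
        exact subset_span ⟨⟨i, j⟩, i.castSucc_lt_succ, rfl⟩
  have hcard : Fintype.card (Σ i, Fin (finrank K (V i))) = finrank K E := by
    have := Fin.apply_last_eq_apply_zero_add_sum (f := fun k => finrank K (U k)) hrank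
    rw [hlast, h0] at this
    rw [Fintype.card_sigma]
    simpa using this.symm
  have htop : ⊤ ≤ span K (Set.range u) :=
    (hlast ▸ hspan (Fin.last t)).trans (span_mono (Set.image_subset_range _ _))
  refine ⟨_, basisOfTopLeSpanOfCardEqFinrank u htop hcard, hrank, ?_⟩
  rw [coe_basisOfTopLeSpanOfCardEqFinrank]
  exact hspan

theorem Module.Basis.measure_setOf_abs_repr_le {E κ : Type*} [Fintype κ] [NormedAddCommGroup E]
    [NormedSpace ℝ E] [MeasurableSpace E] [BorelSpace E] [FiniteDimensional ℝ E]
    (μ : Measure E) [μ.IsAddHaarMeasure] (B : Basis κ ℝ E) (R : κ → ℝ) :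
    μ {x | ∀ k, |B.repr x k| ≤ R k} =
      (μ.map B.equivFunL).addHaarScalarFactor volume * ∏ k, ENNReal.ofReal (2 * R k) := by
  have hset : {x | ∀ k, |B.repr x k| ≤ R k} =
      B.equivFunL ⁻¹' Set.univ.pi fun k => Set.Icc (-R k) (R k) := by
    ext x
    simp only [Set.mem_ofPred_eq, Set.mem_preimage, Set.mem_univ_pi, Set.mem_Icc, abs_le]
    rfl
  rw [hset, ← Measure.map_apply B.equivFunL.continuous.measurable
    (MeasurableSet.univ_pi fun k => measurableSet_Icc)]
  conv_lhs => rw [Measure.isAddLeftInvariant_eq_smul (μ.map B.equivFunL) volume]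
  simp only [Measure.smul_apply, volume_pi_pi, Real.volume_Icc, sub_neg_eq_add, two_mul,
    ENNReal.smul_def, smul_eq_mul]

theorem Spar_subset_iSup {d t : ℕ} {m : Fin t → ℕ} {Y : Fin t → Submodule ℝ (Fin d → ℝ)}
    (v : (i : Fin t) → Module.Basis (Fin (m i)) ℝ (Y i)) (y : Fin t → ℝ) :
    Spar d t m Y v y ⊆ (⨆ i, Y i : Submodule ℝ (Fin d → ℝ)) := by
  rintro _ ⟨a, -, rfl⟩
  exact Submodule.sum_mem _ fun i _ => Submodule.sum_mem _ fun j _ =>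
    Submodule.smul_mem _ _ (Submodule.mem_iSup_of_mem i (v i j).2)

theorem image_Spar_subset_setOf_abs_repr_le {d t : ℕ} {m : Fin t → ℕ}
    {Y : Fin t → Submodule ℝ (Fin d → ℝ)} {v : (i : Fin t) → Module.Basis (Fin (m i)) ℝ (Y i)}
    {F κ : Type*} [AddCommGroup F] [Module ℝ F] (L : (Fin d → ℝ) →ₗ[ℝ] F)
    (B : Module.Basis κ ℝ F) (lev : κ → Fin t)
    (hB : ∀ i j k, B.repr (L (v i j)) k ≠ 0 → lev k ≤ i) {y : Fin t → ℝ} (hy : Antitone y) :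
    L '' Spar d t m Y v y ⊆
      {x | ∀ k, |B.repr x k| ≤ Real.exp (y (lev k)) * ∑ i, ∑ j, |B.repr (L (v i j)) k|} := by
  rintro _ ⟨_, ⟨a, ha, rfl⟩, rfl⟩ k
  have hrepr : B.repr (L (∑ i, ∑ j, a i j • (v i j : Fin d → ℝ))) k =
      ∑ i, ∑ j, a i j * B.repr (L (v i j)) k := by
    simp only [map_sum, map_smul, Finsupp.coe_finsetSum, Finset.sum_apply, Finsupp.coe_smul,
      Pi.smul_apply, smul_eq_mul]
  rw [hrepr]
  refine abs_sum_sum_mul_le_of_antitone (Real.exp_monotone.comp_antitone hy) (lev k)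
    (fun i j => ?_) (fun i j => hB i j k)
  rw [abs_of_nonneg (ha i j).1]
  exact (ha i j).2

theorem exists_volume_image_Spar_le {d d' t : ℕ} {m : Fin t → ℕ}
    {Y : Fin t → Submodule ℝ (Fin d → ℝ)} (v : (i : Fin t) → Module.Basis (Fin (m i)) ℝ (Y i))
    {κ : Type*} [Fintype κ] (L : (Fin d → ℝ) →ₗ[ℝ] (Fin d' → ℝ))
    (B : Module.Basis κ ℝ (Fin d' → ℝ)) (lev : κ → Fin t)
    (hB : ∀ i j k, B.repr (L (v i j)) k ≠ 0 → lev k ≤ i) :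
    ∃ C : ℝ, 0 < C ∧ ∀ y : Fin t → ℝ, Antitone y →
      volume (L '' Spar d t m Y v y) ≤ ENNReal.ofReal (C * Real.exp (∑ k, y (lev k))) := by
  set M : κ → ℝ := fun k => ∑ i, ∑ j, |B.repr (L (v i j)) k|
  set D := (volume.map B.equivFunL).addHaarScalarFactor volume
  refine ⟨D * (∏ k, 2 * M k) + 1, by positivity, fun y hy => ?_⟩
  calc volume (L '' Spar d t m Y v y)
      ≤ volume {x | ∀ k, |B.repr x k| ≤ Real.exp (y (lev k)) * M k} :=
        measure_mono (image_Spar_subset_setOf_abs_repr_le L B lev hB hy)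
    _ = D * ∏ k, ENNReal.ofReal (2 * (Real.exp (y (lev k)) * M k)) :=
        B.measure_setOf_abs_repr_le _ _
    _ = ENNReal.ofReal (D * (∏ k, 2 * M k) * Real.exp (∑ k, y (lev k))) := by
        rw [← ENNReal.ofReal_prod_of_nonneg (fun k _ => by positivity),
          ← ENNReal.ofReal_coe_nnreal, ← ENNReal.ofReal_mul D.coe_nonneg, Real.exp_sum,
          mul_assoc, ← Finset.prod_mul_distrib]
        congr 2
        exact Finset.prod_congr rfl fun k _ => by ring
    _ ≤ ENNReal.ofReal ((D * (∏ k, 2 * M k) + 1) * Real.exp (∑ k, y (lev k))) := by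
        gcongr
        linarith

theorem stmt12_general (d d' t : ℕ) (Y : Fin t → Submodule ℝ (Fin d → ℝ))
    (m : Fin t → ℕ)
    (v : (i : Fin t) → Module.Basis (Fin (m i)) ℝ (Y i))
    (L : (Fin d → ℝ) →ₗ[ℝ] (Fin d' → ℝ))
    (W : Fin (t + 1) → Submodule ℝ (Fin d → ℝ))
    (hW0 : W 0 = ⊥)
    (hWsucc : ∀ i : Fin t, W i.succ = W i.castSucc ⊔ Y i)
    (c : Fin t → ℝ)
    (hc : ∀ i : Fin t, c i = (Module.finrank ℝ ((W i.succ).map L) : ℝ)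
        - (Module.finrank ℝ ((W i.castSucc).map L) : ℝ)) :
    ∃ C : ℝ, 0 < C ∧ ∀ y : Fin t → ℝ, Antitone y →
      volume (L '' Spar d t m Y v y) ≤ ENNReal.ofReal (C * Real.exp (∑ i, y i * c i)) := by
  set U : Fin (t + 1) → Submodule ℝ (Fin d' → ℝ) := fun k => (W k).map L with hU
  have hW : Monotone W := Fin.monotone_iff_le_succ.mpr fun i => hWsucc i ▸ le_sup_left
  have himage : ∀ y, L '' Spar d t m Y v y ⊆ U (Fin.last t) := fun y => by
    have hY : (⨆ i, Y i) ≤ W (Fin.last t) :=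
      iSup_le fun i => (hWsucc i ▸ le_sup_right).trans (hW (Fin.le_last _))
    rw [hU, Submodule.map_coe]
    exact Set.image_mono ((Spar_subset_iSup v y).trans hY)
  by_cases hlast : U (Fin.last t) = ⊤
  swap
  · exact ⟨1, one_pos, fun y _ => (measure_mono (himage y)).trans
      ((Measure.addHaar_submodule volume _ hlast).le.trans zero_le)⟩
  obtain ⟨n, B, hn, hB⟩ := exists_basis_sigma_adapted_to_flag (U := U)
    (fun _ _ h => Submodule.map_mono (hW h)) (by simp [hU, hW0]) hlast
  have hlev : ∀ i j σ, B.repr (L (v i j)) σ ≠ 0 → σ.1 ≤ i := fun i j σ hσ => by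
    have hmem : L (v i j) ∈ U i.succ :=
      Submodule.mem_map_of_mem (hWsucc i ▸ Submodule.mem_sup_right (v i j).2)
    exact Fin.castSucc_lt_succ_iff.mp
      (B.mem_span_image.mp (hB _ hmem) (Finsupp.mem_support_iff.mpr hσ))
  have hcn : ∀ i, c i = n i := fun i => by
    rw [hc i, sub_eq_iff_eq_add']
    exact_mod_cast hn i
  have hsum : ∀ y : Fin t → ℝ, ∑ σ : Σ i, Fin (n i), y σ.1 = ∑ i, y i * c i := fun y => by
    simp [Fintype.sum_sigma, hcn, mul_comm]
  obtain ⟨C, hC, hvol⟩ := exists_volume_image_Spar_le v L B Sigma.fst hlev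
  exact ⟨C, hC, fun y hy => hsum y ▸ hvol y hy⟩

theorem stmt12 (d d' t : ℕ) (Y : Fin t → Submodule ℝ (Fin d → ℝ))
    (hY : DirectSum.IsInternal Y)
    (m : Fin t → ℕ) (hm : ∀ i, m i = Module.finrank ℝ (Y i))
    (v : (i : Fin t) → Module.Basis (Fin (m i)) ℝ (Y i))
    (L : (Fin d → ℝ) →ₗ[ℝ] (Fin d' → ℝ))
    (W : Fin (t + 1) → Submodule ℝ (Fin d → ℝ))
    (hW0 : W 0 = ⊥)
    (hWsucc : ∀ i : Fin t, W i.succ = W i.castSucc ⊔ Y i)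
    (c : Fin t → ℝ)
    (hc : ∀ i : Fin t, c i = (Module.finrank ℝ ((W i.succ).map L) : ℝ)
        - (Module.finrank ℝ ((W i.castSucc).map L) : ℝ)) :
    ∃ C : ℝ, 0 < C ∧ ∀ y : Fin t → ℝ, Antitone y →
      volume (L '' Spar d t m Y v y) ≤ ENNReal.ofReal (C * Real.exp (∑ i, y i * c i)) :=
  stmt12_general d d' t Y m v L W hW0 hWsucc c hc
end
end

section
/- Let F : ℝ³ → ℝ be continuous and suppose Δ₃(F; a, b, c, d, e, f) ≥ 0 for all real numbers a ≤ b, c ≤ d, e ≤ f. Then there exists a nonnegative Borel measure μ on ℝ³ such that for all a ≤ b, c ≤ d, e ≤ f, μ([a,b] × [c,d] × [e,f]) = Δ₃(F; a, b, c, d, e, f). -/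
/-!
The measure comes from Carathéodory's construction with `Δ₃` as the premeasure of half-open
boxes: the outer measure of `s` is the infimum of `∑ Δ₃(Bᵢ)` over countable covers of `s` by
boxes. A coordinate half-space cuts a box into two boxes whose `Δ₃` add up, so half-spaces, and
hence all Borel sets, are Carathéodory measurable.

The real work is the inequality `Δ₃(B) ≤ ∑ Δ₃(Bᵢ)` for boxes `Bᵢ` covering a box `B`. Shrinking
`B` to a closed box and enlarging the `Bᵢ` to open ones costs little by continuity of `F`, and
compactness then leaves a finite cover. Finite covers are handled by discretisation: the measure
`μₕ` with mass `Δ₃(C)` at the upper corner of every cell `C` of the lattice `hℤ³` gives a closed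
box, by telescoping, a mass squeezed between the values of `Δ₃` on two boxes within `h` of it;
subadditivity of `μₕ` followed by `h → 0` gives the inequality. Finally a closed box is the
decreasing limit of half-open ones.
-/

open MeasureTheory

noncomputable section

/-- The third-order difference `Δ₃(F; a, b, c, d, e, f)`. -/
def Delta3 (F : ℝ → ℝ → ℝ → ℝ) (a b c d e f : ℝ) : ℝ :=
  F b d f - F a d f - F b c f - F b d e + F b c e + F a d e + F a c f - F a c e

open Set Filter Topology
open scoped ENNReal

lemma sum_Icc_telescope_of_add {g : ℝ → ℝ → ℝ} (hg : ∀ a b c, g a b + g b c = g a c)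
    (h : ℝ) {m M : ℤ} (hmM : m ≤ M + 1) :
    ∑ k ∈ Finset.Icc m M, g (k * h - h) (k * h) = g (m * h - h) (M * h) := by
  induction M, (show m - 1 ≤ M by omega) using Int.leInduction with
  | base =>
    rw [Finset.Icc_eq_empty (by omega), Finset.sum_empty, Int.cast_sub, Int.cast_one,
      show ((m : ℝ) - 1) * h = m * h - h by ring]
    linarith [hg (m * h - h) (m * h - h) (m * h - h)]
  | succ M hM ih =>
    rw [← Finset.insert_Icc_right_eq_Icc_add_one (by omega), Finset.sum_insert (by simp),
      ih (by omega), add_comm, show ((M + 1 : ℤ) : ℝ) * h - h = M * h by push_cast; ring, hg]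

section FloorCeil

variable {h : ℝ} (hh : 0 < h)
include hh

lemma le_ceil_div_mul (x : ℝ) : x ≤ ⌈x / h⌉ * h :=
  (div_le_iff₀ hh).1 (Int.le_ceil _)

lemma ceil_div_mul_lt (x : ℝ) : ⌈x / h⌉ * h < x + h := by
  have := (mul_lt_mul_iff_left₀ hh).2 (Int.ceil_lt_add_one (x / h))
  rwa [add_mul, div_mul_cancel₀ _ hh.ne', one_mul] at this

lemma floor_div_mul_le (x : ℝ) : ⌊x / h⌋ * h ≤ x := by
  linarith [Int.sub_floor_div_mul_nonneg x hh]

lemma lt_floor_div_mul_add (x : ℝ) : x < ⌊x / h⌋ * h + h := by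
  linarith [Int.sub_floor_div_mul_lt x hh]

lemma ceil_div_le_floor_div {x y : ℝ} (hxy : x ≤ y - h) : ⌈x / h⌉ ≤ ⌊y / h⌋ :=
  Int.le_floor.2 ((le_div_iff₀ hh).2 (by linarith [ceil_div_mul_lt hh x]))

end FloorCeil

variable {F : ℝ → ℝ → ℝ → ℝ}

lemma Delta3_add_x (a m b c d e f : ℝ) :
    Delta3 F a m c d e f + Delta3 F m b c d e f = Delta3 F a b c d e f := by
  unfold Delta3; ring

lemma Delta3_add_y (a b c m d e f : ℝ) :
    Delta3 F a b c m e f + Delta3 F a b m d e f = Delta3 F a b c d e f := by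
  unfold Delta3; ring

lemma Delta3_add_z (a b c d e m f : ℝ) :
    Delta3 F a b c d e m + Delta3 F a b c d m f = Delta3 F a b c d e f := by
  unfold Delta3; ring

def boxDelta (F : ℝ → ℝ → ℝ → ℝ) (u v : ℝ × ℝ × ℝ) : ℝ :=
  Delta3 F u.1 v.1 u.2.1 v.2.1 u.2.2 v.2.2

def boxIoc (u v : ℝ × ℝ × ℝ) : Set (ℝ × ℝ × ℝ) :=
  Ioc u.1 v.1 ×ˢ Ioc u.2.1 v.2.1 ×ˢ Ioc u.2.2 v.2.2

def boxIoo (u v : ℝ × ℝ × ℝ) : Set (ℝ × ℝ × ℝ) :=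
  Ioo u.1 v.1 ×ˢ Ioo u.2.1 v.2.1 ×ˢ Ioo u.2.2 v.2.2

lemma boxIoo_subset_Icc (u v : ℝ × ℝ × ℝ) : boxIoo u v ⊆ Icc u v :=
  fun _ hx => ⟨⟨hx.1.1.le, hx.2.1.1.le, hx.2.2.1.le⟩, ⟨hx.1.2.le, hx.2.1.2.le, hx.2.2.2.le⟩⟩

lemma isOpen_boxIoo (u v : ℝ × ℝ × ℝ) : IsOpen (boxIoo u v) :=
  isOpen_Ioo.prod (isOpen_Ioo.prod isOpen_Ioo)

lemma measurableSet_boxIoc (u v : ℝ × ℝ × ℝ) : MeasurableSet (boxIoc u v) :=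
  measurableSet_Ioc.prod (measurableSet_Ioc.prod measurableSet_Ioc)

lemma Icc_add_subset_boxIoc {τ : ℝ} (hτ : 0 < τ) (u v : ℝ × ℝ × ℝ) :
    Icc (u + (τ, τ, τ)) v ⊆ boxIoc u v := fun _ hx =>
  ⟨⟨(lt_add_of_pos_right _ hτ).trans_le hx.1.1, hx.2.1⟩,
    ⟨(lt_add_of_pos_right _ hτ).trans_le hx.1.2.1, hx.2.2.1⟩,
    ⟨(lt_add_of_pos_right _ hτ).trans_le hx.1.2.2, hx.2.2.2⟩⟩

lemma biInter_boxIoc_sub (u v : ℝ × ℝ × ℝ) :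
    ⋂ r > (0 : ℝ), boxIoc (u - (r, r, r)) v = Icc u v := by
  ext x
  simp only [mem_iInter, boxIoc, mem_prod, mem_Ioc, mem_Icc, Prod.le_def, Prod.fst_sub,
    Prod.snd_sub, sub_lt_iff_lt_add]
  constructor
  · intro hx
    exact ⟨⟨le_of_forall_pos_lt_add fun r hr => (hx r hr).1.1,
      le_of_forall_pos_lt_add fun r hr => (hx r hr).2.1.1,
      le_of_forall_pos_lt_add fun r hr => (hx r hr).2.2.1⟩,
      (hx 1 one_pos).1.2, (hx 1 one_pos).2.1.2, (hx 1 one_pos).2.2.2⟩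
  · rintro ⟨⟨h₁, h₂, h₃⟩, h₄, h₅, h₆⟩ r hr
    exact ⟨⟨by linarith, h₄⟩, ⟨by linarith, h₅⟩, ⟨by linarith, h₆⟩⟩

def gridPoint (h : ℝ) (k : ℤ × ℤ × ℤ) : ℝ × ℝ × ℝ := (k.1 * h, k.2.1 * h, k.2.2 * h)

lemma gridPoint_mono {h : ℝ} (hh : 0 ≤ h) : Monotone (gridPoint h) := fun _ _ hmM =>
  ⟨mul_le_mul_of_nonneg_right (Int.cast_le.2 hmM.1) hh,
    mul_le_mul_of_nonneg_right (Int.cast_le.2 hmM.2.1) hh,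
    mul_le_mul_of_nonneg_right (Int.cast_le.2 hmM.2.2) hh⟩

def gridCeil (h : ℝ) (u : ℝ × ℝ × ℝ) : ℤ × ℤ × ℤ := (⌈u.1 / h⌉, ⌈u.2.1 / h⌉, ⌈u.2.2 / h⌉)

def gridFloor (h : ℝ) (v : ℝ × ℝ × ℝ) : ℤ × ℤ × ℤ := (⌊v.1 / h⌋, ⌊v.2.1 / h⌋, ⌊v.2.2 / h⌋)

lemma gridPoint_mem_Icc_iff {h : ℝ} (hh : 0 < h) {u v : ℝ × ℝ × ℝ} {k : ℤ × ℤ × ℤ} :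
    gridPoint h k ∈ Icc u v ↔ k ∈ Finset.Icc (gridCeil h u) (gridFloor h v) := by
  simp only [gridPoint, gridCeil, gridFloor, Set.mem_Icc, Finset.mem_Icc, Prod.le_def,
    Int.ceil_le, Int.le_floor, div_le_iff₀ hh, le_div_iff₀ hh]

lemma sum_Icc_boxDelta_gridPoint (h : ℝ) {m M : ℤ × ℤ × ℤ} (hmM : m ≤ M + 1) :
    ∑ k ∈ Finset.Icc m M, boxDelta F (gridPoint h k - (h, h, h)) (gridPoint h k)
      = boxDelta F (gridPoint h m - (h, h, h)) (gridPoint h M) := by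
  obtain ⟨h₁, h₂, h₃⟩ := hmM
  simp only [Finset.Icc_prod_def, Finset.sum_product, boxDelta, gridPoint, Prod.fst_sub,
    Prod.snd_sub]
  rw [Finset.sum_congr rfl fun k₁ _ => Finset.sum_congr rfl fun k₂ _ =>
      sum_Icc_telescope_of_add (Delta3_add_z _ _ _ _) h h₃,
    Finset.sum_congr rfl fun k₁ _ =>
      sum_Icc_telescope_of_add (fun c m d => Delta3_add_y _ _ c m d _ _) h h₂]
  exact sum_Icc_telescope_of_add (fun a m b => Delta3_add_x a m b _ _ _ _) h h₁

def gridMeasure (F : ℝ → ℝ → ℝ → ℝ) (h : ℝ) : Measure (ℝ × ℝ × ℝ) :=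
  Measure.sum fun k => ENNReal.ofReal (boxDelta F (gridPoint h k - (h, h, h)) (gridPoint h k)) •
    Measure.dirac (gridPoint h k)

lemma gridMeasure_Icc {h : ℝ} (hh : 0 < h) (u v : ℝ × ℝ × ℝ) :
    gridMeasure F h (Icc u v) = ∑ k ∈ Finset.Icc (gridCeil h u) (gridFloor h v),
      ENNReal.ofReal (boxDelta F (gridPoint h k - (h, h, h)) (gridPoint h k)) := by
  rw [gridMeasure, Measure.sum_apply _ measurableSet_Icc, sum_eq_tsum_indicator]
  refine tsum_congr fun k => ?_
  simp [Measure.dirac_apply' _ measurableSet_Icc, indicator_apply, gridPoint_mem_Icc_iff hh]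

def boxLength (F : ℝ → ℝ → ℝ → ℝ) (s : Set (ℝ × ℝ × ℝ)) : ℝ≥0∞ :=
  ⨅ (u : ℝ × ℝ × ℝ) (v : ℝ × ℝ × ℝ) (_ : u ≤ v) (_ : s ⊆ boxIoc u v),
    ENNReal.ofReal (boxDelta F u v)

lemma boxLength_le {s : Set (ℝ × ℝ × ℝ)} {u v : ℝ × ℝ × ℝ} (huv : u ≤ v)
    (hs : s ⊆ boxIoc u v) : boxLength F s ≤ ENNReal.ofReal (boxDelta F u v) :=
  iInf₂_le_of_le u v (iInf₂_le huv hs)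

lemma boxLength_empty : boxLength F ∅ = 0 :=
  nonpos_iff_eq_zero.1 <| (boxLength_le le_rfl (empty_subset (boxIoc 0 0))).trans_eq <| by
    simp [boxDelta, Delta3]

def boxOuterMeasure (F : ℝ → ℝ → ℝ → ℝ) : OuterMeasure (ℝ × ℝ × ℝ) :=
  OuterMeasure.ofFunction (boxLength F) boxLength_empty

section Continuity

variable (hF : Continuous fun p : ℝ × ℝ × ℝ => F p.1 p.2.1 p.2.2)
include hF

lemma continuous_boxDelta : Continuous fun w : (ℝ × ℝ × ℝ) × (ℝ × ℝ × ℝ) => boxDelta F w.1 w.2 := by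
  have hF' {g : (ℝ × ℝ × ℝ) × (ℝ × ℝ × ℝ) → ℝ × ℝ × ℝ} (hg : Continuous g) :
      Continuous fun w => F (g w).1 (g w).2.1 (g w).2.2 := hF.comp hg
  unfold boxDelta Delta3
  fun_prop

lemma tendsto_ofReal_boxDelta {p q : ℝ → ℝ × ℝ × ℝ} (hp : Continuous p) (hq : Continuous q) :
    Tendsto (fun τ => ENNReal.ofReal (boxDelta F (p τ) (q τ))) (𝓝[>] 0)
      (𝓝 (ENNReal.ofReal (boxDelta F (p 0) (q 0)))) :=
  ((ENNReal.continuous_ofReal.comp ((continuous_boxDelta hF).comp (hp.prodMk hq))).tendsto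
    0).mono_left nhdsWithin_le_nhds

lemma exists_subset_boxIoo_of_boxLength_lt {s : Set (ℝ × ℝ × ℝ)} {r : ℝ≥0∞}
    (hs : boxLength F s < r) : ∃ p q, s ⊆ boxIoo p q ∧ ENNReal.ofReal (boxDelta F p q) < r := by
  simp only [boxLength, iInf_lt_iff] at hs
  obtain ⟨u, v, -, hsub, hlt⟩ := hs
  have hlim := tendsto_ofReal_boxDelta hF (p := fun _ => u) (q := fun τ => v + (τ, τ, τ))
    continuous_const (by fun_prop)
  simp only [Prod.mk_zero_zero, add_zero] at hlim
  obtain ⟨τ, hτ, hτpos⟩ := ((hlim.eventually (gt_mem_nhds hlt)).and self_mem_nhdsWithin).exists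
  refine ⟨u, v + (τ, τ, τ), hsub.trans fun x hx => ?_, hτ⟩
  exact ⟨⟨hx.1.1, hx.1.2.trans_lt (lt_add_of_pos_right _ hτpos)⟩,
    ⟨hx.2.1.1, hx.2.1.2.trans_lt (lt_add_of_pos_right _ hτpos)⟩,
    ⟨hx.2.2.1, hx.2.2.2.trans_lt (lt_add_of_pos_right _ hτpos)⟩⟩

end Continuity

section Nonneg

variable (hΔ : ∀ a b c d e f : ℝ, a ≤ b → c ≤ d → e ≤ f → 0 ≤ Delta3 F a b c d e f)
include hΔ

lemma boxDelta_nonneg {u v : ℝ × ℝ × ℝ} (huv : u ≤ v) : 0 ≤ boxDelta F u v :=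
  hΔ _ _ _ _ _ _ huv.1 huv.2.1 huv.2.2

lemma boxDelta_mono {u' u v v' : ℝ × ℝ × ℝ} (hu : u' ≤ u) (huv : u ≤ v) (hv : v ≤ v') :
    boxDelta F u v ≤ boxDelta F u' v' := by
  obtain ⟨hu₁, hu₂, hu₃⟩ := hu
  obtain ⟨huv₁, huv₂, huv₃⟩ := huv
  obtain ⟨hv₁, hv₂, hv₃⟩ := hv
  -- `boxDelta F u' v' - boxDelta F u v` is the sum of `Δ₃` over six boxes, two per coordinate.
  have := Delta3_add_x (F := F) u'.1 u.1 v.1 u.2.1 v.2.1 u.2.2 v.2.2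
  have := Delta3_add_x (F := F) u'.1 v.1 v'.1 u.2.1 v.2.1 u.2.2 v.2.2
  have := Delta3_add_y (F := F) u'.1 v'.1 u'.2.1 u.2.1 v.2.1 u.2.2 v.2.2
  have := Delta3_add_y (F := F) u'.1 v'.1 u'.2.1 v.2.1 v'.2.1 u.2.2 v.2.2
  have := Delta3_add_z (F := F) u'.1 v'.1 u'.2.1 v'.2.1 u'.2.2 u.2.2 v.2.2
  have := Delta3_add_z (F := F) u'.1 v'.1 u'.2.1 v'.2.1 u'.2.2 v.2.2 v'.2.2
  have := hΔ u'.1 u.1 u.2.1 v.2.1 u.2.2 v.2.2 hu₁ huv₂ huv₃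
  have := hΔ v.1 v'.1 u.2.1 v.2.1 u.2.2 v.2.2 hv₁ huv₂ huv₃
  have := hΔ u'.1 v'.1 u'.2.1 u.2.1 u.2.2 v.2.2 (by linarith) hu₂ huv₃
  have := hΔ u'.1 v'.1 v.2.1 v'.2.1 u.2.2 v.2.2 (by linarith) hv₂ huv₃
  have := hΔ u'.1 v'.1 u'.2.1 v'.2.1 u'.2.2 u.2.2 (by linarith) (by linarith) hu₃
  have := hΔ u'.1 v'.1 u'.2.1 v'.2.1 v.2.2 v'.2.2 (by linarith) (by linarith) hv₃
  unfold boxDelta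
  linarith

lemma gridMeasure_Icc_eq {h : ℝ} (hh : 0 < h) {u v : ℝ × ℝ × ℝ}
    (huv : gridCeil h u ≤ gridFloor h v) :
    gridMeasure F h (Icc u v)
      = ENNReal.ofReal (boxDelta F (gridPoint h (gridCeil h u) - (h, h, h))
          (gridPoint h (gridFloor h v))) := by
  have hcell (k : ℤ × ℤ × ℤ) : 0 ≤ boxDelta F (gridPoint h k - (h, h, h)) (gridPoint h k) :=
    boxDelta_nonneg hΔ (sub_le_self _ ⟨hh.le, hh.le, hh.le⟩)
  rw [gridMeasure_Icc hh, ← ENNReal.ofReal_sum_of_nonneg fun k _ => hcell k,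
    sum_Icc_boxDelta_gridPoint h (huv.trans (le_add_of_nonneg_right zero_le_one))]

lemma gridMeasure_Icc_le {h : ℝ} (hh : 0 < h) (u v : ℝ × ℝ × ℝ) :
    gridMeasure F h (Icc u v) ≤ ENNReal.ofReal (boxDelta F (u - (h, h, h)) v) := by
  by_cases huv : gridCeil h u ≤ gridFloor h v
  · rw [gridMeasure_Icc_eq hΔ hh huv]
    have hlo : u ≤ gridPoint h (gridCeil h u) :=
      ⟨le_ceil_div_mul hh _, le_ceil_div_mul hh _, le_ceil_div_mul hh _⟩
    have hhi : gridPoint h (gridFloor h v) ≤ v :=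
      ⟨floor_div_mul_le hh _, floor_div_mul_le hh _, floor_div_mul_le hh _⟩
    have hmid : gridPoint h (gridCeil h u) - (h, h, h) ≤ gridPoint h (gridFloor h v) :=
      (sub_le_self _ (show (0 : ℝ × ℝ × ℝ) ≤ (h, h, h) from ⟨hh.le, hh.le, hh.le⟩)).trans
        (gridPoint_mono hh.le huv)
    exact ENNReal.ofReal_le_ofReal (boxDelta_mono hΔ (sub_le_sub_right hlo _) hmid hhi)
  · rw [gridMeasure_Icc hh, Finset.Icc_eq_empty huv, Finset.sum_empty]
    exact zero_le

lemma le_gridMeasure_Icc {h : ℝ} (hh : 0 < h) {u v : ℝ × ℝ × ℝ} (huv : u ≤ v - (h, h, h)) :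
    ENNReal.ofReal (boxDelta F u (v - (h, h, h))) ≤ gridMeasure F h (Icc u v) := by
  have hlo : gridPoint h (gridCeil h u) - (h, h, h) ≤ u :=
    ⟨sub_le_iff_le_add.2 (ceil_div_mul_lt hh _).le, sub_le_iff_le_add.2 (ceil_div_mul_lt hh _).le,
      sub_le_iff_le_add.2 (ceil_div_mul_lt hh _).le⟩
  have hhi : v - (h, h, h) ≤ gridPoint h (gridFloor h v) :=
    ⟨sub_le_iff_le_add.2 (lt_floor_div_mul_add hh _).le,
      sub_le_iff_le_add.2 (lt_floor_div_mul_add hh _).le,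
      sub_le_iff_le_add.2 (lt_floor_div_mul_add hh _).le⟩
  have hle : gridCeil h u ≤ gridFloor h v :=
    ⟨ceil_div_le_floor_div hh huv.1, ceil_div_le_floor_div hh huv.2.1,
      ceil_div_le_floor_div hh huv.2.2⟩
  rw [gridMeasure_Icc_eq hΔ hh hle]
  exact ENNReal.ofReal_le_ofReal (boxDelta_mono hΔ hlo huv hhi)

lemma isCaratheodory_of_split {H : Set (ℝ × ℝ × ℝ)}
    (hsplit : ∀ u v : ℝ × ℝ × ℝ, u ≤ v → ∃ w w', w ≤ v ∧ u ≤ w' ∧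
      boxIoc u v ∩ H ⊆ boxIoc w v ∧ boxIoc u v \ H ⊆ boxIoc u w' ∧
      boxDelta F u v = boxDelta F w v + boxDelta F u w') :
    MeasurableSet[(boxOuterMeasure F).caratheodory] H := by
  refine OuterMeasure.ofFunction_caratheodory fun t =>
    le_iInf₂ fun u v => le_iInf₂ fun huv ht => ?_
  obtain ⟨w, w', hw, hw', hin, hout, hadd⟩ := hsplit u v huv
  rw [hadd, ENNReal.ofReal_add (boxDelta_nonneg hΔ hw) (boxDelta_nonneg hΔ hw')]
  exact add_le_add (boxLength_le hw ((inter_subset_inter_left _ ht).trans hin))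
    (boxLength_le hw' ((sdiff_subset_sdiff_left ht).trans hout))

/- Clamping the cut `c` to the box, `max u.i (min c v.i)`, lets one split also serve the
half-spaces that miss the box or contain it. -/

lemma isCaratheodory_fst_preimage_Ioi (c : ℝ) :
    MeasurableSet[(boxOuterMeasure F).caratheodory] ((fun p : ℝ × ℝ × ℝ => p.1) ⁻¹' Ioi c) := by
  refine isCaratheodory_of_split hΔ fun u v huv => ?_
  refine ⟨(max u.1 (min c v.1), u.2), (max u.1 (min c v.1), v.2),
    ⟨max_le huv.1 (min_le_right _ _), huv.2⟩, ⟨le_max_left _ _, huv.2⟩, ?_, ?_,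
    by simp only [boxDelta, Delta3]; ring⟩
  · rintro x ⟨⟨hx₁, hx₂⟩, hxc⟩
    exact ⟨⟨max_lt hx₁.1 ((min_le_left _ _).trans_lt hxc), hx₁.2⟩, hx₂⟩
  · rintro x ⟨⟨hx₁, hx₂⟩, hxc⟩
    exact ⟨⟨hx₁.1, le_max_of_le_right (le_min (not_lt.1 hxc) hx₁.2)⟩, hx₂⟩

lemma isCaratheodory_snd_fst_preimage_Ioi (c : ℝ) :
    MeasurableSet[(boxOuterMeasure F).caratheodory]
      ((fun p : ℝ × ℝ × ℝ => p.2.1) ⁻¹' Ioi c) := by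
  refine isCaratheodory_of_split hΔ fun u v huv => ?_
  refine ⟨(u.1, max u.2.1 (min c v.2.1), u.2.2), (v.1, max u.2.1 (min c v.2.1), v.2.2),
    ⟨huv.1, max_le huv.2.1 (min_le_right _ _), huv.2.2⟩, ⟨huv.1, le_max_left _ _, huv.2.2⟩, ?_, ?_,
    by simp only [boxDelta, Delta3]; ring⟩
  · rintro x ⟨⟨hx₁, hx₂, hx₃⟩, hxc⟩
    exact ⟨hx₁, ⟨max_lt hx₂.1 ((min_le_left _ _).trans_lt hxc), hx₂.2⟩, hx₃⟩
  · rintro x ⟨⟨hx₁, hx₂, hx₃⟩, hxc⟩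
    exact ⟨hx₁, ⟨hx₂.1, le_max_of_le_right (le_min (not_lt.1 hxc) hx₂.2)⟩, hx₃⟩

lemma isCaratheodory_snd_snd_preimage_Ioi (c : ℝ) :
    MeasurableSet[(boxOuterMeasure F).caratheodory]
      ((fun p : ℝ × ℝ × ℝ => p.2.2) ⁻¹' Ioi c) := by
  refine isCaratheodory_of_split hΔ fun u v huv => ?_
  refine ⟨(u.1, u.2.1, max u.2.2 (min c v.2.2)), (v.1, v.2.1, max u.2.2 (min c v.2.2)),
    ⟨huv.1, huv.2.1, max_le huv.2.2 (min_le_right _ _)⟩, ⟨huv.1, huv.2.1, le_max_left _ _⟩, ?_, ?_,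
    by simp only [boxDelta, Delta3]; ring⟩
  · rintro x ⟨⟨hx₁, hx₂, hx₃⟩, hxc⟩
    exact ⟨hx₁, hx₂, ⟨max_lt hx₃.1 ((min_le_left _ _).trans_lt hxc), hx₃.2⟩⟩
  · rintro x ⟨⟨hx₁, hx₂, hx₃⟩, hxc⟩
    exact ⟨hx₁, hx₂, ⟨hx₃.1, le_max_of_le_right (le_min (not_lt.1 hxc) hx₃.2)⟩⟩

lemma borel_le_caratheodory :
    (inferInstance : MeasurableSpace (ℝ × ℝ × ℝ)) ≤ (boxOuterMeasure F).caratheodory := by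
  have hid : Measurable[(boxOuterMeasure F).caratheodory] (id : ℝ × ℝ × ℝ → ℝ × ℝ × ℝ) :=
    (measurable_of_Ioi (isCaratheodory_fst_preimage_Ioi hΔ)).prodMk
      ((measurable_of_Ioi (isCaratheodory_snd_fst_preimage_Ioi hΔ)).prodMk
        (measurable_of_Ioi (isCaratheodory_snd_snd_preimage_Ioi hΔ)))
  exact fun s hs => hid hs

end Nonneg

section Cover

variable (hΔ : ∀ a b c d e f : ℝ, a ≤ b → c ≤ d → e ≤ f → 0 ≤ Delta3 F a b c d e f)
  (hF : Continuous fun p : ℝ × ℝ × ℝ => F p.1 p.2.1 p.2.2)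
include hΔ hF

lemma ofReal_boxDelta_le_sum_of_Icc_subset {δ : ℝ} (hδ : 0 < δ) {u v : ℝ × ℝ × ℝ}
    (huv : u + (δ, δ, δ) ≤ v) {ι : Type*} (s : Finset ι) (p q : ι → ℝ × ℝ × ℝ)
    (hcov : Icc u v ⊆ ⋃ i ∈ s, boxIoo (p i) (q i)) :
    ENNReal.ofReal (boxDelta F u v) ≤ ∑ i ∈ s, ENNReal.ofReal (boxDelta F (p i) (q i)) := by
  have hgrid : ∀ h ∈ Ioc 0 δ, ENNReal.ofReal (boxDelta F u (v - (h, h, h)))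
      ≤ ∑ i ∈ s, ENNReal.ofReal (boxDelta F (p i - (h, h, h)) (q i)) := by
    rintro h ⟨hh, hhδ⟩
    have hhδ' : ((h, h, h) : ℝ × ℝ × ℝ) ≤ (δ, δ, δ) := ⟨hhδ, hhδ, hhδ⟩
    calc ENNReal.ofReal (boxDelta F u (v - (h, h, h)))
        ≤ gridMeasure F h (Icc u v) :=
          le_gridMeasure_Icc hΔ hh (le_sub_iff_add_le.2 ((add_le_add le_rfl hhδ').trans huv))
      _ ≤ gridMeasure F h (⋃ i ∈ s, boxIoo (p i) (q i)) := measure_mono hcov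
      _ ≤ ∑ i ∈ s, gridMeasure F h (boxIoo (p i) (q i)) := measure_biUnion_finset_le _ _
      _ ≤ ∑ i ∈ s, ENNReal.ofReal (boxDelta F (p i - (h, h, h)) (q i)) :=
          Finset.sum_le_sum fun i _ =>
            (measure_mono (boxIoo_subset_Icc _ _)).trans (gridMeasure_Icc_le hΔ hh _ _)
  refine le_of_tendsto_of_tendsto ?_ (tendsto_finsetSum _ fun i _ => ?_)
    (eventually_of_mem (Ioc_mem_nhdsGT hδ) hgrid)
  · simpa [Prod.mk_zero_zero] using tendsto_ofReal_boxDelta hF (p := fun _ => u)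
      (q := fun τ => v - (τ, τ, τ)) continuous_const (by fun_prop)
  · simpa [Prod.mk_zero_zero] using tendsto_ofReal_boxDelta hF
      (p := fun τ => p i - (τ, τ, τ)) (q := fun _ => q i) (by fun_prop) continuous_const

lemma ofReal_boxDelta_le_tsum_boxLength {δ : ℝ} (hδ : 0 < δ) {u v : ℝ × ℝ × ℝ}
    (huv : u + (δ, δ, δ) ≤ v) {t : ℕ → Set (ℝ × ℝ × ℝ)} (hcov : Icc u v ⊆ ⋃ i, t i) :
    ENNReal.ofReal (boxDelta F u v) ≤ ∑' i, boxLength F (t i) := by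
  refine ENNReal.le_of_forall_pos_le_add fun ε hε hfin => ?_
  obtain ⟨ε', hε'pos, hε'⟩ := ENNReal.exists_pos_sum_of_countable (ENNReal.coe_ne_zero.2 hε.ne') ℕ
  have hlt (i : ℕ) : boxLength F (t i) < boxLength F (t i) + ε' i :=
    ENNReal.lt_add_right ((ENNReal.le_tsum i).trans_lt hfin).ne (by simpa using (hε'pos i).ne')
  choose p q hpq hpq_lt using fun i => exists_subset_boxIoo_of_boxLength_lt hF (hlt i)
  obtain ⟨s, hs⟩ := isCompact_Icc.elim_finite_subcover _ (fun i => isOpen_boxIoo (p i) (q i))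
    (hcov.trans (iUnion_mono hpq))
  calc ENNReal.ofReal (boxDelta F u v)
      ≤ ∑ i ∈ s, ENNReal.ofReal (boxDelta F (p i) (q i)) :=
        ofReal_boxDelta_le_sum_of_Icc_subset hΔ hF hδ huv s p q hs
    _ ≤ ∑' i, ENNReal.ofReal (boxDelta F (p i) (q i)) := ENNReal.sum_le_tsum s
    _ ≤ ∑' i, (boxLength F (t i) + ε' i) := ENNReal.tsum_le_tsum fun i => (hpq_lt i).le
    _ = ∑' i, boxLength F (t i) + ∑' i, (ε' i : ℝ≥0∞) := ENNReal.tsum_add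
    _ ≤ ∑' i, boxLength F (t i) + ε := add_le_add le_rfl hε'.le

lemma boxOuterMeasure_boxIoc {δ : ℝ} (hδ : 0 < δ) {u v : ℝ × ℝ × ℝ} (huv : u + (δ, δ, δ) ≤ v) :
    boxOuterMeasure F (boxIoc u v) = ENNReal.ofReal (boxDelta F u v) := by
  have hδ' : (0 : ℝ × ℝ × ℝ) ≤ (δ, δ, δ) := ⟨hδ.le, hδ.le, hδ.le⟩
  refine le_antisymm ((OuterMeasure.ofFunction_le _).trans
    (boxLength_le ((le_add_of_nonneg_right hδ').trans huv) Subset.rfl)) ?_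
  rw [boxOuterMeasure, OuterMeasure.ofFunction_apply]
  refine le_iInf₂ fun t ht => ?_
  have hshrink (τ : ℝ) (hτ : τ ∈ Ioo 0 δ) :
      ENNReal.ofReal (boxDelta F (u + (τ, τ, τ)) v) ≤ ∑' i, boxLength F (t i) :=
    ofReal_boxDelta_le_tsum_boxLength hΔ hF (sub_pos.2 hτ.2) (by simpa [add_assoc] using huv)
      ((Icc_add_subset_boxIoc hτ.1 u v).trans ht)
  refine le_of_tendsto ?_ (eventually_of_mem (Ioo_mem_nhdsGT hδ) hshrink)
  simpa [Prod.mk_zero_zero] using tendsto_ofReal_boxDelta hF (p := fun τ => u + (τ, τ, τ))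
    (q := fun _ => v) (by fun_prop) continuous_const

lemma toMeasure_boxOuterMeasure_Icc {u v : ℝ × ℝ × ℝ} (huv : u ≤ v) :
    (boxOuterMeasure F).toMeasure (borel_le_caratheodory hΔ) (Icc u v)
      = ENNReal.ofReal (boxDelta F u v) := by
  set μ := (boxOuterMeasure F).toMeasure (borel_le_caratheodory hΔ)
  have hμ (r : ℝ) (hr : 0 < r) :
      μ (boxIoc (u - (r, r, r)) v) = ENNReal.ofReal (boxDelta F (u - (r, r, r)) v) := by
    rw [toMeasure_apply _ _ (measurableSet_boxIoc _ _)]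
    exact boxOuterMeasure_boxIoc hΔ hF hr (by simpa using huv)
  have hmono (r r' : ℝ) (_ : 0 < r) (hrr' : r ≤ r') :
      boxIoc (u - (r, r, r)) v ⊆ boxIoc (u - (r', r', r')) v := fun x hx =>
    ⟨⟨lt_of_le_of_lt (sub_le_sub_left hrr' _) hx.1.1, hx.1.2⟩,
      ⟨lt_of_le_of_lt (sub_le_sub_left hrr' _) hx.2.1.1, hx.2.1.2⟩,
      ⟨lt_of_le_of_lt (sub_le_sub_left hrr' _) hx.2.2.1, hx.2.2.2⟩⟩
  have hlim := tendsto_measure_biInter_gt (μ := μ)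
    (fun r _ => (measurableSet_boxIoc _ _).nullMeasurableSet) hmono
    ⟨1, one_pos, by rw [hμ 1 one_pos]; exact ENNReal.ofReal_ne_top⟩
  rw [biInter_boxIoc_sub] at hlim
  have hcont : Tendsto (fun r => ENNReal.ofReal (boxDelta F (u - (r, r, r)) v)) (𝓝[>] 0)
      (𝓝 (ENNReal.ofReal (boxDelta F u v))) := by
    simpa [Prod.mk_zero_zero] using tendsto_ofReal_boxDelta hF (p := fun r => u - (r, r, r))
      (q := fun _ => v) (by fun_prop) continuous_const
  exact tendsto_nhds_unique hlim
    (hcont.congr' (eventually_nhdsWithin_of_forall fun r hr => (hμ r hr).symm))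

end Cover

theorem stmt13 (F : ℝ → ℝ → ℝ → ℝ)
    (hFc : Continuous fun p : ℝ × ℝ × ℝ => F p.1 p.2.1 p.2.2)
    (hΔ : ∀ a b c d e f : ℝ, a ≤ b → c ≤ d → e ≤ f → 0 ≤ Delta3 F a b c d e f) :
    ∃ μ : Measure (ℝ × ℝ × ℝ),
      ∀ a b c d e f : ℝ, a ≤ b → c ≤ d → e ≤ f →
        μ (Set.Icc a b ×ˢ Set.Icc c d ×ˢ Set.Icc e f)
          = ENNReal.ofReal (Delta3 F a b c d e f) := by
  refine ⟨(boxOuterMeasure F).toMeasure (borel_le_caratheodory hΔ),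
    fun a b c d e f hab hcd hef => ?_⟩
  rw [Icc_prod_Icc, Icc_prod_Icc]
  exact toMeasure_boxOuterMeasure_Icc hΔ hFc ⟨hab, hcd, hef⟩
end
end

section
/- Let d ≥ 1 and n ≥ 1, and let ρ : [0,∞)^n → [0,∞) be Borel measurable, nondecreasing in each coordinate, satisfy ρ(y_1,...,y_n) = 0 whenever some y_j = 0, and suppose there is C < ∞ with ρ(λ_1 y_1, ..., λ_n y_n) ≤ C · (max_i λ_i) · ρ(y_1,...,y_n) for all 0 < λ_i, y_i < ∞. Then there exists C' < ∞ such that ∫_{ℝ^d} ρ(f_1(x), ..., f_n(x)) dx ≤ C' · ρ(∫ f_1, ..., ∫ f_n) for all nonnegative f_1, ..., f_n ∈ L¹(ℝ^d). -/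
/-!
Normalise each `f i` by its integral `I i`. At every point the vector `f x` is dominated
coordinatewise by `S x • I` with `S = ∑ i, f i / I i`, so monotonicity and the scaling hypothesis
give `ρ (f x) ≤ C * S x * ρ I`, and `∫ S = n`. If some `I i` vanishes, then `f i = 0` a.e., hence
`ρ (f x) = 0` a.e.
-/

open MeasureTheory ENNReal Finset

section
variable {ι : Type*} [Fintype ι] {α : Type*} [MeasurableSpace α] {μ : Measure α}

lemma le_sum_div_mul {y z : ι → ℝ} (hy : ∀ i, 0 ≤ y i) (hz : ∀ i, 0 < z i) (i : ι) :
    y i ≤ (∑ j, y j / z j) * z i := by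
  rw [← div_le_iff₀ (hz i)]
  exact single_le_sum (fun j _ => div_nonneg (hy j) (hz j).le) (mem_univ i)

lemma lintegral_ofReal_sum_div_integral {f : ι → α → ℝ} (hf : ∀ i x, 0 ≤ f i x)
    (hint : ∀ i, Integrable (f i) μ) (hpos : ∀ i, 0 < ∫ x, f i x ∂μ) :
    ∫⁻ x, ENNReal.ofReal (∑ i, f i x / ∫ x, f i x ∂μ) ∂μ = Fintype.card ι := by
  have hint_div : ∀ i ∈ univ, Integrable (fun x => f i x / ∫ x, f i x ∂μ) μ :=
    fun i _ => (hint i).div_const _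
  have hnonneg : 0 ≤ᵐ[μ] fun x => ∑ i, f i x / ∫ x, f i x ∂μ :=
    ae_of_all _ fun x => sum_nonneg fun i _ => div_nonneg (hf i x) (hpos i).le
  rw [← ofReal_integral_eq_lintegral_ofReal (integrable_finsetSum _ hint_div) hnonneg,
    integral_finsetSum _ hint_div]
  simp [integral_div, (hpos _).ne']

omit [Fintype ι] in
lemma lintegral_ofReal_comp_eq_zero_of_integral_eq_zero {ρ : (ι → ℝ) → ℝ}
    (hρzero : ∀ y : ι → ℝ, (∀ i, 0 ≤ y i) → (∃ i, y i = 0) → ρ y = 0)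
    {f : ι → α → ℝ} (hf : ∀ i x, 0 ≤ f i x) (hint : ∀ i, Integrable (f i) μ) {i : ι} (hi : ∫ x, f i x ∂μ = 0) :
    ∫⁻ x, ENNReal.ofReal (ρ fun j => f j x) ∂μ = 0 := by
  have hfi : f i =ᵐ[μ] 0 := (integral_eq_zero_iff_of_nonneg (hf i) (hint i)).mp hi
  refine (lintegral_congr_ae ?_).trans lintegral_zero
  filter_upwards [hfi] with x hx
  simp [hρzero _ (fun j => hf j x) ⟨i, hx⟩]

variable [Nonempty ι] {ρ : (ι → ℝ) → ℝ} {C : ℝ}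
  (hρmono : ∀ y z : ι → ℝ, (∀ i, 0 ≤ y i) → (∀ i, y i ≤ z i) → ρ y ≤ ρ z)
  (hρzero : ∀ y : ι → ℝ, (∀ i, 0 ≤ y i) → (∃ i, y i = 0) → ρ y = 0)
  (hρscale : ∀ lam y : ι → ℝ, (∀ i, 0 < lam i) → (∀ i, 0 < y i) →
    ρ (fun i => lam i * y i) ≤ C * (⨆ i, lam i) * ρ y)
include hρmono hρzero hρscale

lemma apply_le_mul_sum_div {y z : ι → ℝ} (hy : ∀ i, 0 ≤ y i) (hz : ∀ i, 0 < z i) :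
    ρ y ≤ C * (∑ i, y i / z i) * ρ z := by
  set s := ∑ i, y i / z i
  have hys : ∀ i, y i ≤ s * z i := le_sum_div_mul hy hz
  have hs_nonneg : 0 ≤ s := sum_nonneg fun i _ => div_nonneg (hy i) (hz i).le
  rcases hs_nonneg.eq_or_lt with hs | hs
  · obtain ⟨i⟩ := ‹Nonempty ι›
    have hyi : y i = 0 := le_antisymm (by simpa [← hs] using hys i) (hy i)
    simp [hρzero y hy ⟨i, hyi⟩, ← hs]
  · calc ρ y ≤ ρ (fun i => s * z i) := hρmono _ _ hy hys
      _ ≤ C * s * ρ z := by simpa using hρscale (fun _ => s) z (fun _ => hs) hz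

theorem lintegral_ofReal_comp_le {f : ι → α → ℝ} (hf : ∀ i x, 0 ≤ f i x)
    (hint : ∀ i, Integrable (f i) μ) :
    ∫⁻ x, ENNReal.ofReal (ρ fun i => f i x) ∂μ
      ≤ ENNReal.ofReal (Fintype.card ι * C * ρ fun i => ∫ x, f i x ∂μ) := by
  by_cases hzero : ∃ i, ∫ x, f i x ∂μ = 0
  · obtain ⟨i, hi⟩ := hzero
    simp [lintegral_ofReal_comp_eq_zero_of_integral_eq_zero hρzero hf hint hi]
  simp only [not_exists] at hzero
  set I : ι → ℝ := fun i => ∫ x, f i x ∂μ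
  have hI : ∀ i, 0 < I i := fun i => (integral_nonneg (hf i)).lt_of_ne' (hzero i)
  calc ∫⁻ x, ENNReal.ofReal (ρ fun i => f i x) ∂μ
      ≤ ∫⁻ x, ENNReal.ofReal (C * ρ I) * ENNReal.ofReal (∑ i, f i x / I i) ∂μ := by
        refine lintegral_mono fun x => ?_
        rw [← ofReal_mul' (sum_nonneg fun i _ => div_nonneg (hf i x) (hI i).le)]
        refine ofReal_le_ofReal ?_
        linarith [apply_le_mul_sum_div hρmono hρzero hρscale (fun i => hf i x) hI]
    _ = ENNReal.ofReal (C * ρ I) * Fintype.card ι := by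
        rw [lintegral_const_mul' _ _ ofReal_ne_top, lintegral_ofReal_sum_div_integral hf hint hI]
    _ = ENNReal.ofReal (Fintype.card ι * C * ρ I) := by
        rw [← ofReal_natCast, ← ofReal_mul' (Nat.cast_nonneg _), mul_comm, mul_assoc]

end

theorem stmt18_general (d n : ℕ) (hn : 0 < n)
    (ρ : (Fin n → ℝ) → ℝ)
    (hρmono : ∀ y z : Fin n → ℝ, (∀ i, 0 ≤ y i) → (∀ i, y i ≤ z i) → ρ y ≤ ρ z)
    (hρzero : ∀ y : Fin n → ℝ, (∀ i, 0 ≤ y i) → (∃ i, y i = 0) → ρ y = 0)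
    (C : ℝ)
    (hρscale : ∀ lam y : Fin n → ℝ, (∀ i, 0 < lam i) → (∀ i, 0 < y i) →
      ρ (fun i => lam i * y i) ≤ C * (⨆ i, lam i) * ρ y) :
    ∃ C' : ℝ, ∀ f : Fin n → (Fin d → ℝ) → ℝ,
      (∀ i, ∀ x, 0 ≤ f i x) → (∀ i, Integrable (f i)) →
      ∫⁻ x : Fin d → ℝ, ENNReal.ofReal (ρ (fun i => f i x))
        ≤ ENNReal.ofReal (C' * ρ (fun i => ∫ x, f i x)) := by
  have : Nonempty (Fin n) := Fin.pos_iff_nonempty.mp hn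
  refine ⟨n * C, fun f hf hint => ?_⟩
  simpa using lintegral_ofReal_comp_le hρmono hρzero hρscale hf hint

theorem stmt18 (d n : ℕ) (hd : 0 < d) (hn : 0 < n)
    (ρ : (Fin n → ℝ) → ℝ) (hρmeas : Measurable ρ)
    (hρ0 : ∀ y : Fin n → ℝ, (∀ i, 0 ≤ y i) → 0 ≤ ρ y)
    (hρmono : ∀ y z : Fin n → ℝ, (∀ i, 0 ≤ y i) → (∀ i, y i ≤ z i) → ρ y ≤ ρ z)
    (hρzero : ∀ y : Fin n → ℝ, (∀ i, 0 ≤ y i) → (∃ i, y i = 0) → ρ y = 0)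
    (C : ℝ)
    (hρscale : ∀ lam y : Fin n → ℝ, (∀ i, 0 < lam i) → (∀ i, 0 < y i) →
      ρ (fun i => lam i * y i) ≤ C * (⨆ i, lam i) * ρ y) :
    ∃ C' : ℝ, ∀ f : Fin n → (Fin d → ℝ) → ℝ,
      (∀ i, ∀ x, 0 ≤ f i x) → (∀ i, Integrable (f i)) →
      ∫⁻ x : Fin d → ℝ, ENNReal.ofReal (ρ (fun i => f i x))
        ≤ ENNReal.ofReal (C' * ρ (fun i => ∫ x, f i x)) :=
  stmt18_general d n hn ρ hρmono hρzero C hρscale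
end
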